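/- arXiv:2306.07488 — 7 statements merged into one kernel-verified Lean document; each statement's English description precedes it below -/
import Mathlib

section
/- Let $L_U$ be an $\mathbb{F}_q$-linear set of rank $m \leq n(r-2)$ in $\mathrm{PG}(r-1, q^n)$ with $r > 2$. Then for each point $P \in L_U$, the number of lines through $P$ that are tangent to $L_U$ (i.e., meet $L_U$ only in $P$) exceeds $(q^{n(r-2)} - 1)/(q^n - 1)$; in particular, these tangent lines are not all contained in a single hyperplane, so there exist $r-1$ tangent lines through $P$ spanning $\mathrm{PG}(r-1, q^n)$. -/
/-!
Lines through `P = ⟨v⟩` are the preimages of the points of `Q = V ⧸ ⟨v⟩`, a space of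
dimension `r - 1` over `𝔽_{q^n}`, and such a line is tangent to `L_U` exactly when its point
avoids the image `Ū` of `U` in `Q`. Each point meeting `Ū ∖ {0}` is spanned by one of the at
most `q^m - 1 ≤ q^{n(r-2)} - 1` elements of `Ū ∖ {0}`, while `Q` has
`q^{n(r-2)} + (q^{n(r-2)}-1)/(q^n-1)` points; so more than `(q^{n(r-2)}-1)/(q^n-1)` points
avoid `Ū`. That is more than a hyperplane of `Q` contains, so the avoiding points span `Q`,
and a basis chosen among them lifts to `r - 1` tangent lines spanning `V`.
-/

open Module Submodule

theorem ncard_image_sdiff_zero_le {α β : Type*} [Zero α] [Zero β] (f : α → β) (hf : f 0 = 0)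
    {U : Set α} (hU : 0 ∈ U) (hfin : U.Finite) :
    (f '' U \ {0}).ncard ≤ U.ncard - 1 := by
  rw [Set.ncard_sdiff_singleton_of_mem (hf ▸ Set.mem_image_of_mem f hU)]
  exact Nat.sub_le_sub_right (Set.ncard_image_le hfin) 1

section Points

variable (L : Type*) {Q : Type*} [Field L] [AddCommGroup Q] [Module L Q]

def pointsAvoiding (A : Set Q) : Set (Submodule L Q) :=
  {ℓ | finrank L ℓ = 1 ∧ ∀ a ∈ A, a ∈ ℓ → a = 0}

variable {L}

theorem ncard_setOf_finrank_eq_one_le_ncard_pointsAvoiding_add [Finite Q] (A : Set Q) :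
    {ℓ : Submodule L Q | finrank L ℓ = 1}.ncard ≤
      (pointsAvoiding L A).ncard + (A \ {0}).ncard := by
  have hcover : {ℓ : Submodule L Q | finrank L ℓ = 1} ⊆
      pointsAvoiding L A ∪ (fun a => span L {a}) '' (A \ {0}) := by
    intro ℓ hℓ
    by_cases hgood : ∀ a ∈ A, a ∈ ℓ → a = 0
    · exact Or.inl ⟨hℓ, hgood⟩
    · push Not at hgood
      obtain ⟨a, haA, haℓ, ha0⟩ := hgood
      exact Or.inr ⟨a, ⟨haA, ha0⟩,
        (eq_span_singleton_of_mem_of_finrank_eq_one hℓ haℓ ha0).symm⟩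
  calc _ ≤ (pointsAvoiding L A ∪ (fun a => span L {a}) '' (A \ {0})).ncard :=
        Set.ncard_le_ncard hcover (Set.toFinite _)
    _ ≤ _ := (Set.ncard_union_le _ _).trans
        (add_le_add_right (Set.ncard_image_le (Set.toFinite _)) _)

theorem ncard_setOf_finrank_eq_one [Finite L] :
    {ℓ : Submodule L Q | finrank L ℓ = 1}.ncard =
      ∑ i ∈ Finset.range (finrank L Q), Nat.card L ^ i := by
  rw [← Projectivization.card_of_finrank L Q rfl, ← Nat.card_coe_set_eq]
  exact Nat.card_congr (Projectivization.equivSubmodule L Q).symm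

theorem ncard_setOf_finrank_eq_one_and_le [Finite L] (X : Submodule L Q) :
    {ℓ : Submodule L Q | finrank L ℓ = 1 ∧ ℓ ≤ X}.ncard =
      ∑ i ∈ Finset.range (finrank L X), Nat.card L ^ i := by
  have himage : {ℓ : Submodule L Q | finrank L ℓ = 1 ∧ ℓ ≤ X} =
      map X.subtype '' {ℓ : Submodule L X | finrank L ℓ = 1} := by
    ext ℓ
    constructor
    · rintro ⟨hℓ, hle⟩
      have hmap : map X.subtype (comap X.subtype ℓ) = ℓ := by
        rwa [map_comap_subtype, inf_eq_right]
      refine ⟨comap X.subtype ℓ, ?_, hmap⟩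
      show finrank L _ = 1
      rwa [← finrank_map_subtype_eq, hmap]
    · rintro ⟨ℓ, hℓ, rfl⟩
      exact ⟨by rwa [finrank_map_subtype_eq], map_subtype_le X ℓ⟩
  rw [himage, Set.ncard_image_of_injective _ (map_injective_of_injective X.injective_subtype),
    ncard_setOf_finrank_eq_one]

theorem sum_range_lt_ncard_pointsAvoiding [Finite L] [Finite Q] {k : ℕ}
    (hQ : finrank L Q = k + 1) {A : Set Q} (hA : (A \ {0}).ncard < Nat.card L ^ k) :
    ∑ i ∈ Finset.range k, Nat.card L ^ i < (pointsAvoiding L A).ncard := by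
  have h := ncard_setOf_finrank_eq_one_le_ncard_pointsAvoiding_add (L := L) A
  rw [ncard_setOf_finrank_eq_one, hQ, Finset.sum_range_succ] at h
  omega

theorem span_eq_top_of_sum_lt_ncard [Finite L] [Finite Q] {P : Set (Submodule L Q)}
    (hP : ∀ ℓ ∈ P, finrank L ℓ = 1)
    (hcard : ∑ i ∈ Finset.range (finrank L Q - 1), Nat.card L ^ i < P.ncard) :
    span L {a | span L {a} ∈ P} = ⊤ := by
  have : Module.Finite L Q := Module.Finite.of_finite (R := L)
  by_contra hne
  set X := span L {a | span L {a} ∈ P}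
  have hX : finrank L X ≤ finrank L Q - 1 := by
    have := finrank_lt hne
    omega
  have hsub : P ⊆ {ℓ | finrank L ℓ = 1 ∧ ℓ ≤ X} := by
    intro ℓ hℓ
    have hℓ0 : ℓ ≠ ⊥ := by
      rintro rfl
      simpa using hP ⊥ hℓ
    obtain ⟨a, haℓ, ha0⟩ := exists_mem_ne_zero_of_ne_bot hℓ0
    have hspan := (eq_span_singleton_of_mem_of_finrank_eq_one (hP ℓ hℓ) haℓ ha0).symm
    refine ⟨hP ℓ hℓ, hspan ▸ span_mono ?_⟩
    rw [Set.singleton_subset_iff]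
    show span L {a} ∈ P
    rwa [hspan]
  have h := Set.ncard_le_ncard hsub (Set.toFinite _)
  rw [ncard_setOf_finrank_eq_one_and_le] at h
  have := Finset.sum_le_sum_of_subset (f := (Nat.card L ^ ·)) (Finset.range_mono hX)
  omega

end Points

theorem comap_mkQ_iSup {R M : Type*} [Ring R] [AddCommGroup M] [Module R M] (S : Submodule R M)
    {ι : Sort*} [Nonempty ι] (p : ι → Submodule R (M ⧸ S)) :
    comap S.mkQ (⨆ i, p i) = ⨆ i, comap S.mkQ (p i) := by
  have hmap : map S.mkQ (⨆ i, comap S.mkQ (p i)) = ⨆ i, p i := by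
    simp only [Submodule.map_iSup, map_comap_eq_of_surjective S.mkQ_surjective]
  rw [← hmap, comap_map_eq, ker_mkQ, sup_eq_left]
  obtain ⟨i⟩ := ‹Nonempty ι›
  exact (le_comap_mkQ S (p i)).trans (le_iSup (fun i => comap S.mkQ (p i)) i)

section Lines

variable (L : Type*) {V : Type*} [Field L] [AddCommGroup V] [Module L V]

def tangentLines (U : Set V) (v : V) : Set (Submodule L V) :=
  {W | finrank L W = 2 ∧ v ∈ W ∧ ∀ u ∈ U, u ≠ 0 → u ∈ W → u ∈ span L {v}}

variable {L}

theorem finrank_comap_mkQ [FiniteDimensional L V] (S : Submodule L V)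
    (ℓ : Submodule L (V ⧸ S)) :
    finrank L (comap S.mkQ ℓ) = finrank L ℓ + finrank L S := by
  have h := LinearMap.finrank_range_add_finrank_ker (S.mkQ.domRestrict (comap S.mkQ ℓ))
  rw [LinearMap.range_domRestrict, map_comap_eq_of_surjective S.mkQ_surjective,
    LinearMap.ker_domRestrict, ker_mkQ, (comapSubtypeEquivOfLe (le_comap_mkQ S ℓ)).finrank_eq]
    at h
  exact h.symm

variable [FiniteDimensional L V] {U : Set V} {v : V}

theorem comap_mkQ_mem_tangentLines (hv : v ≠ 0) {ℓ : Submodule L (V ⧸ span L {v})}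
    (hℓ : ℓ ∈ pointsAvoiding L ((span L {v}).mkQ '' U)) :
    comap (span L {v}).mkQ ℓ ∈ tangentLines L U v := by
  obtain ⟨hrank, havoid⟩ := hℓ
  refine ⟨by rw [finrank_comap_mkQ, hrank, finrank_span_singleton hv],
    le_comap_mkQ _ ℓ (mem_span_singleton_self v), fun u hu _ huW => ?_⟩
  rw [← Quotient.mk_eq_zero]
  exact havoid _ ⟨u, hu, rfl⟩ huW

theorem image_comap_mkQ_pointsAvoiding (hv : v ≠ 0) :
    comap (span L {v}).mkQ '' pointsAvoiding L ((span L {v}).mkQ '' U) = tangentLines L U v := by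
  refine Set.Subset.antisymm
    (Set.image_subset_iff.mpr fun ℓ hℓ => comap_mkQ_mem_tangentLines hv hℓ) ?_
  rintro W ⟨hrank, hvW, htangent⟩
  have hW : comap (span L {v}).mkQ (map (span L {v}).mkQ W) = W := by
    rw [comap_map_eq, ker_mkQ, sup_eq_left, span_singleton_le_iff_mem]
    exact hvW
  refine ⟨map (span L {v}).mkQ W, ⟨?_, ?_⟩, hW⟩
  · have := finrank_comap_mkQ (span L {v}) (map (span L {v}).mkQ W)
    rw [hW, hrank, finrank_span_singleton hv] at this
    omega
  · rintro _ ⟨u, hu, rfl⟩ huW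
    rw [← mem_comap, hW] at huW
    rw [mkQ_apply, Quotient.mk_eq_zero]
    by_cases hu0 : u = 0
    · rw [hu0]
      exact zero_mem _
    · exact htangent u hu hu0 huW

theorem ncard_tangentLines (hv : v ≠ 0) :
    (tangentLines L U v).ncard = (pointsAvoiding L ((span L {v}).mkQ '' U)).ncard := by
  rw [← image_comap_mkQ_pointsAvoiding hv,
    Set.ncard_image_of_injective _ (comap_injective_of_surjective (mkQ_surjective _))]

theorem exists_finset_tangentLines_iSup_eq_top (hv : v ≠ 0) (hV : 2 ≤ finrank L V)
    (hspan : span L {a | span L {a} ∈ pointsAvoiding L ((span L {v}).mkQ '' U)} = ⊤) :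
    ∃ T : Finset (Submodule L V), T.card = finrank L V - 1 ∧
      (∀ W ∈ T, W ∈ tangentLines L U v) ∧ (⨆ W ∈ T, W) = ⊤ := by
  classical
  set S := span L {v}
  have hQ : finrank L (V ⧸ S) = finrank L V - 1 := by
    have := S.finrank_quotient_add_finrank
    rw [finrank_span_singleton hv] at this
    omega
  have : Nontrivial (V ⧸ S) := nontrivial_of_finrank_pos (R := L) (by omega)
  let b := Basis.ofSpan hspan.ge
  have : Fintype _ := FiniteDimensional.fintypeBasisIndex b
  have : Nonempty _ := b.index_nonempty
  let lift := fun i => comap S.mkQ (span L {b i})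
  have hinj : Function.Injective lift :=
    (comap_injective_of_surjective S.mkQ_surjective).comp
      (b.linearIndependent.iSupIndep_span_singleton.injective fun i => by simpa using b.ne_zero i)
  refine ⟨Finset.univ.image lift, ?_, ?_, ?_⟩
  · rw [Finset.card_image_of_injective _ hinj, Finset.card_univ, ← finrank_eq_card_basis b, hQ]
  · simp only [Finset.mem_image, Finset.mem_univ, true_and]
    rintro _ ⟨i, rfl⟩
    exact comap_mkQ_mem_tangentLines hv (Basis.ofSpan_subset hspan.ge ⟨i, rfl⟩)
  · simp only [Finset.iSup_finset_image, Finset.mem_univ, iSup_true, lift]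
    rw [← comap_mkQ_iSup, ← span_range_eq_iSup, b.span_eq, comap_top]

end Lines

theorem stmt_2_general (q n r m : ℕ) (K L : Type*) [Field K] [Field L]
    [Fintype K] [Fintype L] (hK : Fintype.card K = q) (hL : Fintype.card L = q ^ n)
    (V : Type*) [AddCommGroup V] [Module L V] [Module K V]
    [Module.Finite L V]
    (hV : Module.finrank L V = r) (hr : 2 < r)
    (U : Submodule K V) (hU : Module.finrank K U = m) (hm : m ≤ n * (r - 2))
    (v : V) (hv : v ≠ 0) :
    Set.ncard {W : Submodule L V | Module.finrank L W = 2 ∧ v ∈ W ∧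
        ∀ u ∈ U, u ≠ 0 → u ∈ W → u ∈ Submodule.span L {v}} >
      (q ^ (n * (r - 2)) - 1) / (q ^ n - 1) ∧
    ∃ T : Finset (Submodule L V), T.card = r - 1 ∧
      (∀ W ∈ T, Module.finrank L W = 2 ∧ v ∈ W ∧
        ∀ u ∈ U, u ≠ 0 → u ∈ W → u ∈ Submodule.span L {v}) ∧
      (⨆ W ∈ T, W) = (⊤ : Submodule L V) := by
  set S := span L {v}
  set A := S.mkQ '' (U : Set V)
  have : Finite V := Module.finite_of_finite L
  have : Finite (V ⧸ S) := Module.finite_of_finite L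
  have hq : 0 < q := hK ▸ Fintype.card_pos
  have hc : 2 ≤ q ^ n := hL ▸ Fintype.one_lt_card
  have hcardL : Nat.card L = q ^ n := by rw [Nat.card_eq_fintype_card, hL]
  have hQ : finrank L (V ⧸ S) = r - 2 + 1 := by
    have := S.finrank_quotient_add_finrank
    rw [finrank_span_singleton hv, hV] at this
    omega
  have hA : (A \ {0}).ncard < Nat.card L ^ (r - 2) := by
    have hUcard : (U : Set V).ncard = q ^ m := by
      rw [← Nat.card_coe_set_eq]
      change Nat.card U = _
      rw [natCard_eq_pow_finrank (K := K), hU, Nat.card_eq_fintype_card, hK]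
    have hqm : q ^ m ≤ Nat.card L ^ (r - 2) := by
      rw [hcardL, ← pow_mul]
      exact Nat.pow_le_pow_right hq hm
    have : (A \ {0}).ncard ≤ _ :=
      ncard_image_sdiff_zero_le S.mkQ (map_zero _) U.zero_mem (Set.toFinite _)
    have := Nat.one_le_pow m q hq
    omega
  have hgood := sum_range_lt_ncard_pointsAvoiding hQ hA
  rw [hcardL] at hgood
  refine ⟨?_, ?_⟩
  · rw [gt_iff_lt, pow_mul, ← Nat.geomSum_eq hc]
    exact (ncard_tangentLines (L := L) (U := (U : Set V)) hv).symm ▸ hgood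
  · have hspan := span_eq_top_of_sum_lt_ncard (P := pointsAvoiding L A) (fun ℓ hℓ => hℓ.1)
      (by rwa [hQ, Nat.add_sub_cancel, hcardL])
    rw [← hV]
    exact exists_finset_tangentLines_iSup_eq_top hv (by omega) hspan

/-- For an `F_q`-linear set `L_U` of rank `m ≤ n(r-2)` in `PG(r-1, q^n)`, `r > 2`,
through each point `P = ⟨v⟩ ∈ L_U` there are more than `(q^{n(r-2)}-1)/(q^n-1)`
tangent lines to `L_U`, and there exist `r - 1` tangent lines through `P`
spanning the whole space. -/
theorem stmt_2 (q n r m : ℕ) (K L : Type*) [Field K] [Field L] [Algebra K L]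
    [Fintype K] [Fintype L] (hK : Fintype.card K = q) (hL : Fintype.card L = q ^ n)
    (V : Type*) [AddCommGroup V] [Module L V] [Module K V] [IsScalarTower K L V]
    [Module.Finite L V]
    (hV : Module.finrank L V = r) (hr : 2 < r)
    (U : Submodule K V) (hU : Module.finrank K U = m) (hm : m ≤ n * (r - 2))
    (v : V) (hv : v ≠ 0) (hvU : v ∈ U) :
    Set.ncard {W : Submodule L V | Module.finrank L W = 2 ∧ v ∈ W ∧
        ∀ u ∈ U, u ≠ 0 → u ∈ W → u ∈ Submodule.span L {v}} >
      (q ^ (n * (r - 2)) - 1) / (q ^ n - 1) ∧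
    ∃ T : Finset (Submodule L V), T.card = r - 1 ∧
      (∀ W ∈ T, Module.finrank L W = 2 ∧ v ∈ W ∧
        ∀ u ∈ U, u ≠ 0 → u ∈ W → u ∈ Submodule.span L {v}) ∧
      (⨆ W ∈ T, W) = (⊤ : Submodule L V) :=
  stmt_2_general q n r m K L hK hL V hV hr U hU hm v hv
end

section
/- Let $U$ be an $m$-dimensional $\mathbb{F}_q$-subspace of $\mathbb{F}_{q^n}^t$ such that $\dim_{\mathbb{F}_{q^n}} \langle U \rangle_{\mathbb{F}_{q^n}} = m$. If $f \in \mathbb{F}_{q^n}[x_0, \ldots, x_{t-1}]$ is a homogeneous polynomial of degree $d \leq q$ that vanishes at every vector of $U$, then $f$ vanishes at every vector of $\langle U \rangle_{\mathbb{F}_{q^n}}$. -/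
/-!
Write `w = ∑ aᵢ uᵢ` with `uᵢ ∈ U`. The polynomial `g(y) = f(∑ yᵢ uᵢ)` in the coefficients `y` is
homogeneous of degree `d ≤ q` and vanishes on `K^k`, so it suffices to show that such a `g` is zero.
If `d < q`, every exponent of `g` is `< q` and the combinatorial Nullstellensatz applies. If `d = q`,
the only monomials of `g` with an exponent `≥ q` are the pure powers `Xᵢ^q`; since `x^q = x` on `K`,
replacing each of them by `Xᵢ` gives a polynomial with exponents `< q` vanishing on `K^k`, hence zero,
and as its parts of degree `q` and `1` must vanish separately, `g = 0`.
-/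

open MvPolynomial

theorem Finsupp.eq_single_of_degree_le_apply {σ : Type*} (s : σ →₀ ℕ) (j : σ)
    (h : s.degree ≤ s j) : s = Finsupp.single j (s j) := by
  have hsplit := Finsupp.single_add_erase j s
  have hdeg : (s.erase j).degree = 0 := by
    have := congrArg Finsupp.degree hsplit
    rw [map_add, Finsupp.degree_single] at this
    omega
  rw [Finsupp.degree_eq_zero_iff] at hdeg
  rw [hdeg, add_zero] at hsplit
  exact hsplit.symm

namespace MvPolynomial

theorem eval_bind₁_sum_C_mul_X {ι τ R : Type*} [CommSemiring R] [Fintype ι]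
    (v : ι → τ → R) (y : ι → R) (f : MvPolynomial τ R) :
    eval y (bind₁ (fun j => ∑ i, C (v i j) * X i) f) = eval (∑ i, y i • v i) f := by
  change eval₂Hom (RingHom.id R) y _ = eval₂Hom (RingHom.id R) _ f
  rw [eval₂Hom_bind₁]
  congr 2 with j
  change eval y _ = _
  simp [mul_comm]

variable {K L : Type*} [Field K] [Fintype K] [CommRing L] [IsDomain L] [Algebra K L]

theorem eq_zero_of_degreeOf_lt_of_eval_algebraMap_eq_zero {σ : Type*} [Finite σ]
    {p : MvPolynomial σ L} (hdeg : ∀ i, p.degreeOf i < Fintype.card K)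
    (hp : ∀ x : σ → K, eval (algebraMap K L ∘ x) p = 0) : p = 0 := by
  classical
  let S : Finset L := Finset.univ.map ⟨algebraMap K L, (algebraMap K L).injective⟩
  refine eq_zero_of_eval_zero_at_prod_finset p (fun _ => S) (by simpa [S] using hdeg) ?_
  intro x hx
  choose y hy using fun i => by simpa [S] using hx i
  obtain rfl : x = algebraMap K L ∘ y := _root_.funext fun i => (hy i).symm
  exact hp y

theorem IsHomogeneous.eq_zero_of_eval_algebraMap_eq_zero_of_eq_card {σ : Type*} [Fintype σ]
    {g : MvPolynomial σ L} (hg : g.IsHomogeneous (Fintype.card K))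
    (hvan : ∀ x : σ → K, eval (algebraMap K L ∘ x) g = 0) : g = 0 := by
  classical
  set q := Fintype.card K
  have hq : 1 < q := Fintype.one_lt_card
  set c : σ → L := fun i => coeff (Finsupp.single i q) g
  set P : MvPolynomial σ L := ∑ i, C (c i) * X i ^ q
  set ℓ : MvPolynomial σ L := ∑ i, C (c i) * X i
  have hgP : (g - P).IsHomogeneous q :=
    hg.sub (IsHomogeneous.sum _ _ _ fun i _ => isHomogeneous_C_mul_X_pow _ _ _)
  have hℓ : ℓ.IsHomogeneous 1 := IsHomogeneous.sum _ _ _ fun i _ => isHomogeneous_C_mul_X _ _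
  have hdeg : ∀ j, (g - P).degreeOf j < q := by
    intro j
    rw [degreeOf_lt_iff (by omega)]
    intro s hs
    by_contra! hjs
    have hsdeg : s.degree = q := by
      rw [Finsupp.degree_apply, ← hgP.degree_eq_sum_deg_support hs]
    obtain rfl : s = Finsupp.single j q := by
      have := s.eq_single_of_degree_le_apply j (by omega)
      rwa [show s j = q by have := s.le_degree j; omega] at this
    apply mem_support_iff.mp hs
    simp [P, c, coeff_sum, coeff_X_pow, Finsupp.single_left_inj (show q ≠ 0 by omega)]
  have hzero : g - P + ℓ = 0 := by
    refine eq_zero_of_degreeOf_lt_of_eval_algebraMap_eq_zero (K := K) (fun j => ?_) (fun x => ?_)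
    · have := (degreeOf_le_totalDegree ℓ j).trans hℓ.totalDegree_le
      exact (degreeOf_add_le j _ _).trans_lt (max_lt (hdeg j) (by omega))
    · have hXq : ∀ i, eval (algebraMap K L ∘ x) (X i ^ q) = algebraMap K L (x i) := fun i => by
        rw [map_pow, eval_X, Function.comp_apply, ← map_pow, FiniteField.pow_card]
      simp [P, ℓ, hvan, hXq]
  have hℓ0 : ℓ = 0 := by
    by_contra hne
    rw [← neg_eq_of_add_eq_zero_left hzero] at hgP
    exact hq.ne' (hgP.inj_right hℓ.neg (neg_ne_zero.mpr hne))
  have hc : c = 0 := by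
    ext i
    simpa [ℓ, Pi.single_apply] using congrArg (eval (Pi.single i 1)) hℓ0
  simpa [P, ℓ, hc] using hzero

theorem IsHomogeneous.eq_zero_of_eval_algebraMap_eq_zero {σ : Type*} [Finite σ]
    {g : MvPolynomial σ L} {d : ℕ} (hg : g.IsHomogeneous d) (hd : d ≤ Fintype.card K)
    (hvan : ∀ x : σ → K, eval (algebraMap K L ∘ x) g = 0) : g = 0 := by
  rcases hd.lt_or_eq with hlt | rfl
  · refine eq_zero_of_degreeOf_lt_of_eval_algebraMap_eq_zero (fun i => ?_) hvan
    exact ((degreeOf_le_totalDegree g i).trans hg.totalDegree_le).trans_lt hlt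
  · have := Fintype.ofFinite σ
    exact hg.eq_zero_of_eval_algebraMap_eq_zero_of_eq_card hvan

theorem IsHomogeneous.eval_eq_zero_of_mem_span {τ : Type*} {f : MvPolynomial τ L} {d : ℕ}
    (hf : f.IsHomogeneous d) (hd : d ≤ Fintype.card K) {U : Submodule K (τ → L)}
    (hvan : ∀ u ∈ U, eval u f = 0) {w : τ → L} (hw : w ∈ Submodule.span L (U : Set (τ → L))) :
    eval w f = 0 := by
  obtain ⟨k, a, v, rfl⟩ := Submodule.mem_span_set'.mp hw
  set g := bind₁ (fun j => ∑ i, C ((v i : τ → L) j) * X i) f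
  have hg : g.IsHomogeneous d := by
    have := hf.aeval (fun j => ∑ i, C ((v i : τ → L) j) * X i) fun j =>
      IsHomogeneous.sum _ _ _ fun i _ => isHomogeneous_C_mul_X _ i
    rwa [one_mul] at this
  have hg0 : g = 0 := by
    refine hg.eq_zero_of_eval_algebraMap_eq_zero hd fun x => ?_
    rw [eval_bind₁_sum_C_mul_X]
    simpa only [Function.comp_apply, algebraMap_smul] using
      hvan _ (U.sum_mem fun i _ => U.smul_mem (x i) (v i).2)
  rw [← eval_bind₁_sum_C_mul_X, show bind₁ _ f = g from rfl, hg0, map_zero]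

end MvPolynomial

theorem stmt_3_general (q t d : ℕ) (K L : Type*) [Field K] [Field L] [Algebra K L]
    [Fintype K] (hK : Fintype.card K = q)
    (U : Submodule K (Fin t → L))
    (f : MvPolynomial (Fin t) L) (hf : f.IsHomogeneous d) (hd : d ≤ q)
    (hvan : ∀ u ∈ U, MvPolynomial.eval u f = 0) :
    ∀ w ∈ Submodule.span L (U : Set (Fin t → L)), MvPolynomial.eval w f = 0 :=
  fun _ hw => hf.eval_eq_zero_of_mem_span (hK ▸ hd) hvan hw

/-- If `U` is an `m`-dimensional `F_q`-subspace of `F_{q^n}^t` with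
`dim_{F_{q^n}} ⟨U⟩ = m`, and `f` is a homogeneous polynomial of degree `d ≤ q`
vanishing on `U`, then `f` vanishes on the `F_{q^n}`-span of `U`. -/
theorem stmt_3 (q n t m d : ℕ) (K L : Type*) [Field K] [Field L] [Algebra K L]
    [Fintype K] [Fintype L] (hK : Fintype.card K = q) (hL : Fintype.card L = q ^ n)
    (U : Submodule K (Fin t → L)) (hU : Module.finrank K U = m)
    (hspan : Module.finrank L (Submodule.span L (U : Set (Fin t → L))) = m)
    (f : MvPolynomial (Fin t) L) (hf : f.IsHomogeneous d) (hd : d ≤ q)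
    (hvan : ∀ u ∈ U, MvPolynomial.eval u f = 0) :
    ∀ w ∈ Submodule.span L (U : Set (Fin t → L)), MvPolynomial.eval w f = 0 :=
  stmt_3_general q t d K L hK U f hf hd hvan
end

section
/- Let $\Lambda$ be an $r$-dimensional $\mathbb{F}_{q^n}$-vector space with a non-degenerate reflexive sesquilinear form $\sigma$, and let $\sigma'(u,v) = \mathrm{Tr}_{q^n/q}(\sigma(u,v))$ be the induced $\mathbb{F}_q$-bilinear form on $\Lambda$ viewed as an $rn$-dimensional $\mathbb{F}_q$-space. If $R$ is an $s$-dimensional $\mathbb{F}_{q^n}$-subspace and $U$ is a $t$-dimensional $\mathbb{F}_q$-subspace of $\Lambda$, then $\dim_{\mathbb{F}_q}(U^{\tau'} \cap R^{\tau}) - \dim_{\mathbb{F}_q}(U \cap R) = rn - t - sn$, where $\tau$ and $\tau'$ denote the orthogonal complement maps with respect to $\sigma$ and $\sigma'$ respectively. -/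
/-!
For `W = U + R` one has `U^{τ'} ∩ R^τ = W^{τ'}`, because `R^τ = R^{τ'}` for an
`𝔽_{q^n}`-subspace `R`. Non-degeneracy of `σ'` gives `dim W^{τ'} = rn - dim W`, and Grassmann's
formula gives `dim W = t + sn - dim (U ∩ R)`.

The form `σ'` is semilinear in its second argument for the restriction of `ι` to `𝔽_q`, an
automorphism of `𝔽_q` because `𝔽_q` is the set of roots of `X^q - X` in `𝔽_{q^n}`. So `W^{τ'}` is
the dual coannihilator of the image of `W` under the injective semilinear map `x ↦ σ'(·, x)`,
and that image has the same dimension as `W`.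
-/

open Module Polynomial

namespace FiniteField

variable {K L : Type*} [Field K] [Fintype K] [Field L] [Algebra K L]

theorem mem_fieldRange_algebraMap_iff {c : L} :
    c ∈ (algebraMap K L).fieldRange ↔ c ^ Fintype.card K = c := by
  have hsplit : (X ^ Fintype.card K - X : K[X]).Splits := by
    simpa using (isSplittingField_sub K K).splits
  have hne : (X ^ Fintype.card K - X : K[X]).map (algebraMap K L) ≠ 0 := by
    rw [Polynomial.map_ne_zero_iff (algebraMap K L).injective]
    exact X_pow_card_sub_X_ne_zero K Fintype.one_lt_card
  have := hsplit.roots_map_of_injective (algebraMap K L).injective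
  rw [roots_X_pow_card_sub_X] at this
  have hmem := congrArg (c ∈ ·) this
  simp only [mem_roots hne, IsRoot, eval_map_algebraMap, aeval_sub, aeval_X_pow, aeval_X,
    sub_eq_zero, Multiset.mem_map, Finset.mem_val, Finset.mem_univ, true_and] at hmem
  rw [RingHom.mem_fieldRange, hmem]

theorem exists_ringEquiv_algebraMap_apply (ι : L ≃+* L) :
    ∃ ρ : K ≃+* K, ∀ a, algebraMap K L (ρ a) = ι (algebraMap K L a) := by
  have hmem (a : K) : ι (algebraMap K L a) ∈ (algebraMap K L).fieldRange := by
    rw [mem_fieldRange_algebraMap_iff, ← map_pow, ← map_pow, FiniteField.pow_card]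
  let ρ : K →+* K := (algebraMap K L).rangeRestrictFieldEquiv.symm.toRingHom.comp
    (((ι : L →+* L).comp (algebraMap K L)).codRestrict _ hmem)
  refine ⟨RingEquiv.ofBijective ρ ⟨ρ.injective, Finite.surjective_of_injective ρ.injective⟩,
    fun a => ?_⟩
  exact (algebraMap K L).rangeRestrictFieldEquiv_apply_symm_apply _

end FiniteField

theorem Submodule.finrank_map_of_injective_semilinear {K₁ K₂ V₁ V₂ : Type*} [DivisionRing K₁]
    [DivisionRing K₂] [AddCommGroup V₁] [Module K₁ V₁] [AddCommGroup V₂] [Module K₂ V₂]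
    {ρ : K₁ →+* K₂} [RingHomSurjective ρ] (f : V₁ →ₛₗ[ρ] V₂) (hf : Function.Injective f)
    (W : Submodule K₁ V₁) :
    finrank K₂ (W.map f) = finrank K₁ W := by
  have hinj : Function.Injective (f.submoduleMap W) := fun x y hxy =>
    Subtype.ext (hf (congrArg Subtype.val hxy))
  let e : W ≃+ W.map f :=
    AddEquiv.ofBijective (f.submoduleMap W) ⟨hinj, f.submoduleMap_surjective W⟩
  have := lift_rank_eq_of_equiv_equiv ρ e ⟨ρ.injective, ρ.surjective⟩
    (fun a x => (f.submoduleMap W).map_smulₛₗ a x)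
  simpa only [finrank, Cardinal.toNat_lift] using (congrArg Cardinal.toNat this).symm

theorem Subspace.finrank_dualCoannihilator_map_add_finrank {K V : Type*} [Field K]
    [AddCommGroup V] [Module K V] [FiniteDimensional K V] {ρ : K →+* K} [RingHomSurjective ρ]
    (D : V →ₛₗ[ρ] Dual K V) (hD : Function.Injective D) (W : Submodule K V) :
    finrank K (W.map D).dualCoannihilator + finrank K W = finrank K V := by
  rw [← Submodule.finrank_map_of_injective_semilinear D hD W, add_comm]
  exact Subspace.finrank_add_finrank_dualCoannihilator_eq _

section TraceDual

variable {K L Λ : Type*} [Field K] [Field L] [Algebra K L]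
  [AddCommGroup Λ] [Module L Λ] [Module K Λ] [IsScalarTower K L Λ]
  {ι : L →+* L} {ρ : K →+* K}

theorem Algebra.eq_zero_of_forall_trace_mul_eq_zero [FiniteDimensional K L]
    [Algebra.IsSeparable K L] {c : L} (hc : ∀ b : L, Algebra.trace K L (b * c) = 0) : c = 0 :=
  (traceForm_nondegenerate K L).1 c fun b => by
    rw [Algebra.traceForm_apply, mul_comm]
    exact hc b

/-- The trace form `σ'(u, x) = Tr (B u x)`, curried in `x`. -/
noncomputable def traceDual (hρ : ∀ a, algebraMap K L (ρ a) = ι (algebraMap K L a))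
    (B : Λ →ₗ[L] Λ →ₛₗ[ι] L) : Λ →ₛₗ[ρ] Dual K Λ where
  toFun x :=
    { toFun := fun u => Algebra.trace K L (B u x)
      map_add' := fun u v => by simp only [map_add, LinearMap.add_apply]
      map_smul' := fun a u => by
        simp only [LinearMap.map_smul_of_tower, LinearMap.smul_apply, RingHom.id_apply] }
  map_add' x y := by
    ext u
    simp only [map_add, LinearMap.coe_mk, AddHom.coe_mk, LinearMap.add_apply]
  map_smul' b x := by
    ext u
    simp only [LinearMap.coe_mk, AddHom.coe_mk, LinearMap.smul_apply, smul_eq_mul]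
    rw [← algebraMap_smul L b x, LinearMap.map_smulₛₗ, ← hρ, algebraMap_smul, map_smul,
      smul_eq_mul]

variable (hρ : ∀ a, algebraMap K L (ρ a) = ι (algebraMap K L a)) (B : Λ →ₗ[L] Λ →ₛₗ[ι] L)

@[simp]
theorem traceDual_apply (x u : Λ) : traceDual hρ B x u = Algebra.trace K L (B u x) := rfl

theorem traceDual_injective [FiniteDimensional K L] [Algebra.IsSeparable K L]
    (hrefl : B.IsRefl) (hsep : B.SeparatingLeft) : Function.Injective (traceDual hρ B) := by
  refine (injective_iff_map_eq_zero _).2 fun x hx => hsep x fun v => hrefl v x ?_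
  refine Algebra.eq_zero_of_forall_trace_mul_eq_zero (K := K) fun b => ?_
  rw [← smul_eq_mul, ← LinearMap.smul_apply, ← map_smul, ← traceDual_apply hρ, hx,
    LinearMap.zero_apply]

variable [RingHomSurjective ρ]

theorem mem_dualCoannihilator_map_traceDual {W : Submodule K Λ} {u : Λ} :
    u ∈ (W.map (traceDual hρ B)).dualCoannihilator ↔ ∀ x ∈ W, Algebra.trace K L (B u x) = 0 := by
  simp

theorem mem_dualCoannihilator_map_traceDual_restrictScalars [FiniteDimensional K L]
    [Algebra.IsSeparable K L] [RingHomSurjective ι] {R : Submodule L Λ} {u : Λ} :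
    u ∈ ((R.restrictScalars K).map (traceDual hρ B)).dualCoannihilator ↔ ∀ x ∈ R, B u x = 0 := by
  rw [mem_dualCoannihilator_map_traceDual]
  refine ⟨fun h x hx => Algebra.eq_zero_of_forall_trace_mul_eq_zero (K := K) fun b => ?_,
    fun h x hx => by rw [h x hx, map_zero]⟩
  obtain ⟨c, rfl⟩ := ι.surjective b
  rw [← smul_eq_mul, ← LinearMap.map_smulₛₗ]
  exact h _ (R.smul_mem c hx)

end TraceDual

theorem Module.finrank_eq_of_card_eq_pow {K V : Type*} [Field K] [Fintype K] [AddCommGroup V]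
    [Module K V] [Fintype V] {n : ℕ} (h : Fintype.card V = Fintype.card K ^ n) :
    finrank K V = n :=
  Nat.pow_right_injective Fintype.one_lt_card (card_eq_pow_finrank.symm.trans h)

/-- Duality formula: for a non-degenerate reflexive sesquilinear form `σ` on an
`r`-dimensional `F_{q^n}`-space `Λ` and the induced trace form `σ'`, for an
`s`-dimensional `F_{q^n}`-subspace `R` and a `t`-dimensional `F_q`-subspace `U`,
`dim_q(U^{τ'} ∩ R^τ) - dim_q(U ∩ R) = rn - t - sn`. -/
theorem stmt_4 (q n r s t : ℕ) (K L : Type*) [Field K] [Field L] [Algebra K L]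
    [Fintype K] [Fintype L] (hK : Fintype.card K = q) (hL : Fintype.card L = q ^ n)
    (Λ : Type*) [AddCommGroup Λ] [Module L Λ] [Module K Λ] [IsScalarTower K L Λ]
    [Module.Finite L Λ] (hΛ : Module.finrank L Λ = r)
    (σ : Λ → Λ → L) (ι : L ≃+* L)
    (hadd₁ : ∀ u v w : Λ, σ (u + v) w = σ u w + σ v w)
    (hadd₂ : ∀ u v w : Λ, σ u (v + w) = σ u v + σ u w)
    (hsmul₁ : ∀ (a : L) (u v : Λ), σ (a • u) v = a * σ u v)
    (hsmul₂ : ∀ (a : L) (u v : Λ), σ u (a • v) = ι a * σ u v)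
    (hrefl : ∀ u v : Λ, σ u v = 0 ↔ σ v u = 0)
    (hnd : ∀ u : Λ, u ≠ 0 → ∃ v : Λ, σ u v ≠ 0)
    (R : Submodule L Λ) (hR : Module.finrank L R = s)
    (U : Submodule K Λ) (hU : Module.finrank K U = t)
    (Rτ : Submodule L Λ) (hRτ : ∀ u : Λ, u ∈ Rτ ↔ ∀ x ∈ R, σ u x = 0)
    (Uτ : Submodule K Λ)
    (hUτ : ∀ u : Λ, u ∈ Uτ ↔ ∀ x ∈ U, Algebra.trace K L (σ u x) = 0) :
    (Module.finrank K ↥(Uτ ⊓ Rτ.restrictScalars K) : ℤ) -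
        Module.finrank K ↥(U ⊓ R.restrictScalars K) =
      (r : ℤ) * n - t - s * n := by
  subst hK
  have : Module.Finite K Λ := Module.Finite.trans L Λ
  obtain ⟨ρ, hρ⟩ := FiniteField.exists_ringEquiv_algebraMap_apply (K := K) ι
  let B : Λ →ₗ[L] Λ →ₛₗ[(ι : L →+* L)] L := LinearMap.mk₂'ₛₗ _ _ σ hadd₁ hsmul₁ hadd₂ hsmul₂
  let D := traceDual (ρ := (ρ : K →+* K)) hρ B
  have hD : Function.Injective D := traceDual_injective hρ B (fun u v => (hrefl u v).1)
    fun u hu => by_contra fun hu0 => (hnd u hu0).elim fun v hv => hv (hu v)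
  have horth : Uτ ⊓ Rτ.restrictScalars K =
      ((U ⊔ R.restrictScalars K).map D).dualCoannihilator := by
    rw [Submodule.map_sup, Submodule.dualCoannihilator_sup_eq]
    congr 1 <;> ext u
    · exact (hUτ u).trans (mem_dualCoannihilator_map_traceDual hρ B).symm
    · exact (hRτ u).trans (mem_dualCoannihilator_map_traceDual_restrictScalars hρ B).symm
  have hn : finrank K L = n := finrank_eq_of_card_eq_pow hL
  have hΛK : finrank K Λ = n * r := by rw [← finrank_mul_finrank K L Λ, hn, hΛ]
  have hRK : finrank K (R.restrictScalars K) = n * s := by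
    rw [((Submodule.restrictScalarsEquiv K L Λ R).restrictScalars K).finrank_eq,
      ← finrank_mul_finrank K L R, hn, hR]
  have hdual := Subspace.finrank_dualCoannihilator_map_add_finrank D hD (U ⊔ R.restrictScalars K)
  have hsup := Submodule.finrank_sup_add_finrank_inf_eq U (R.restrictScalars K)
  rw [hΛK] at hdual
  rw [hU, hRK] at hsup
  rw [horth]
  zify at hdual hsup
  linear_combination hdual - hsup
end

section
/- Let $L_U$ be an $\mathbb{F}_q$-linear set of $\mathrm{PG}(r-1, q^n)$ of rank $(r-2)n + k$, $k > 0$, with a point $P$ of weight $1$. Assuming each line through $P$ of weight $h$ contains at least $q^{h-1} + 1$ points of $L_U$, one has $|L_U| \geq q^{(r-2)n+k-1} + (q^{n(r-1)} - 1)/(q^n - 1)$. -/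
open Module Submodule Finset


/-- For an `F_q`-linear set of rank `(r-2)n + k`, `k > 0`, in `PG(r-1,q^n)` with
a point `P = ⟨v⟩` of weight `1`, if each line through `P` of weight `h` contains
at least `q^{h-1} + 1` points of `L_U`, then
`|L_U| ≥ q^{(r-2)n+k-1} + (q^{n(r-1)}-1)/(q^n-1)`. -/
theorem stmt_9 (q n r k : ℕ) (K L : Type*) [Field K] [Field L] [Algebra K L]
    [Fintype K] [Fintype L] (hK : Fintype.card K = q) (hL : Fintype.card L = q ^ n)
    (V : Type*) [AddCommGroup V] [Module L V] [Module K V] [IsScalarTower K L V]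
    [Module.Finite L V]
    (hV : Module.finrank L V = r)
    (U : Submodule K V) (hU : Module.finrank K U = (r - 2) * n + k) (hk : 0 < k)
    (v : V) (hv : v ≠ 0) (hvU : v ∈ U)
    (hw : Module.finrank K ↥(U ⊓ (Submodule.span L {v}).restrictScalars K) = 1)
    (hlines : ∀ W : Submodule L V, Module.finrank L W = 2 → v ∈ W →
      q ^ (Module.finrank K ↥(U ⊓ W.restrictScalars K) - 1) + 1 ≤
        Set.ncard {P : Submodule L V | (∃ u ∈ U, u ≠ 0 ∧ P = Submodule.span L {u})
          ∧ P ≤ W}) :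
    q ^ ((r - 2) * n + k - 1) + (q ^ (n * (r - 1)) - 1) / (q ^ n - 1) ≤
      Set.ncard {P : Submodule L V | ∃ u ∈ U, u ≠ 0 ∧ P = Submodule.span L {u}} := by
  classical
  have hq2 : 1 < q := hK ▸ Fintype.one_lt_card
  have hqn2 : 1 < q ^ n := hL ▸ Fintype.one_lt_card
  have hn1 : 0 < n := by
    rcases Nat.eq_zero_or_pos n with h | h
    · simp [h] at hqn2
    · exact h
  haveI : Finite V := Module.finite_of_finite L
  haveI : Fintype V := Fintype.ofFinite V
  haveI : Module.Finite K V := Module.Finite.of_finite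
  haveI : Nontrivial V := nontrivial_of_ne v 0 hv
  haveI : Finite (Submodule L V) := Finite.of_injective _ SetLike.coe_injective
  haveI : Fintype (Submodule L V) := Fintype.ofFinite _
  have hKL : Module.finrank K L = n := by
    have h := card_eq_pow_finrank (K := K) (V := L)
    rw [hK, hL] at h
    exact (Nat.pow_right_injective hq2 h.symm)
  have hr1 : 0 < r := hV ▸ Module.finrank_pos
  -- cardinality of K-submodules
  have cardT : ∀ T : Submodule K V, Nat.card ↥T = q ^ Module.finrank K ↥T := by
    intro T
    rw [Nat.card_eq_fintype_card, card_eq_pow_finrank (K := K), hK]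
  -- finrank over K of (restrictScalars of an L-submodule)
  have frW : ∀ W : Submodule L V,
      Module.finrank K ↥(W.restrictScalars K) = n * Module.finrank L ↥W := by
    intro W
    calc Module.finrank K ↥(W.restrictScalars K)
        = Module.finrank K ↥W :=
          LinearEquiv.finrank_eq
            ((Submodule.restrictScalarsEquiv (S := K) (R := L) (M := V) W).restrictScalars K)
      _ = n * Module.finrank L ↥W := by
          rw [← Module.finrank_mul_finrank (F := K) (K := L) (A := ↥W), hKL]
  -- the point P and lines through it
  set P : Submodule L V := Submodule.span L {v} with hPdef
  have hvP : v ∈ P := Submodule.mem_span_singleton_self v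
  have frP : Module.finrank L ↥P = 1 := finrank_span_singleton hv
  have L1 : ∀ u : V, u ∉ P → Module.finrank L ↥(Submodule.span L {v, u}) = 2 := by
    intro u hu
    have husp : u ∈ Submodule.span L {v, u} := Submodule.subset_span (by simp)
    have hle : P ≤ Submodule.span L {v, u} := Submodule.span_mono (by simp)
    have hlt : P < Submodule.span L {v, u} :=
      lt_of_le_of_ne hle (fun h => hu (by rw [h]; exact husp))
    have h1 := Submodule.finrank_lt_finrank_of_lt hlt
    rw [frP] at h1
    have h2 : Module.finrank L ↥(Submodule.span L ({v, u} : Set V)) ≤ 2 := by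
      have h3 := finrank_span_le_card (R := L) ({v, u} : Set V)
      have h4 : (({v, u} : Set V).toFinset).card ≤ 2 := by
        rw [Set.toFinset_insert, Set.toFinset_singleton]
        exact (Finset.card_insert_le _ _).trans (by simp)
      omega
    omega
  have L2 : ∀ (u : V) (W : Submodule L V), u ∉ P → Module.finrank L ↥W = 2 → v ∈ W →
      u ∈ W → Submodule.span L {v, u} = W := by
    intro u W hu hW2 hvW huW
    apply Submodule.eq_of_le_of_finrank_le
      (Submodule.span_le.2 (by simp [Set.insert_subset_iff, hvW, huW]))
    rw [hW2, L1 u hu]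
  set S : Finset (Submodule L V) :=
    Finset.univ.filter (fun W => Module.finrank L ↥W = 2 ∧ v ∈ W) with hSdef
  -- the partition identity
  have ncf : ∀ T' : Submodule K V, Nat.card ↥T' = (Finset.univ.filter (· ∈ T')).card := by
    intro T'
    rw [Nat.card_eq_fintype_card, Fintype.card_subtype]
  have partition : ∀ T : Submodule K V, v ∈ T →
      (∑ W ∈ S, Nat.card ↥(T ⊓ W.restrictScalars K)) + Nat.card ↥(T ⊓ P.restrictScalars K)
        = Nat.card ↥T + S.card * Nat.card ↥(T ⊓ P.restrictScalars K) := by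
    intro T hvT
    have key : ∀ W ∈ S,
        ((Finset.univ.filter (fun u => u ∈ T ∧ u ∉ P)).filter
            (fun u => Submodule.span L {v, u} = W)).card
          + Nat.card ↥(T ⊓ P.restrictScalars K)
        = Nat.card ↥(T ⊓ W.restrictScalars K) := by
      intro W hW
      rw [hSdef, Finset.mem_filter] at hW
      obtain ⟨-, hW2, hvW⟩ := hW
      have hPW : P.restrictScalars K ≤ W.restrictScalars K := by
        have hsub : Submodule.span L {v} ≤ W := Submodule.span_le.2 (by simp [hvW])
        rw [hPdef]
        intro x hx
        exact hsub hx
      rw [ncf, ncf, Finset.filter_filter]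
      have split := Finset.card_filter_add_card_filter_not
        (s := Finset.univ.filter (· ∈ T ⊓ W.restrictScalars K)) (p := fun u => u ∉ P)
      rw [Finset.filter_filter, Finset.filter_filter] at split
      have e1 : (Finset.univ.filter fun u => (u ∈ T ∧ u ∉ P) ∧ Submodule.span L {v, u} = W)
          = Finset.univ.filter (fun u => u ∈ T ⊓ W.restrictScalars K ∧ u ∉ P) := by
        apply Finset.filter_congr
        intro u _
        simp only [Submodule.mem_inf, Submodule.restrictScalars_mem]
        constructor
        · rintro ⟨⟨h1, h2⟩, rfl⟩
          exact ⟨⟨h1, Submodule.subset_span (by simp)⟩, h2⟩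
        · rintro ⟨⟨h1, h2⟩, h3⟩
          exact ⟨⟨h1, h3⟩, L2 u W h3 hW2 hvW h2⟩
      have e2 : (Finset.univ.filter (· ∈ T ⊓ P.restrictScalars K))
          = Finset.univ.filter (fun u => u ∈ T ⊓ W.restrictScalars K ∧ ¬ u ∉ P) := by
        apply Finset.filter_congr
        intro u _
        simp only [Submodule.mem_inf, Submodule.restrictScalars_mem, not_not]
        constructor
        · rintro ⟨h1, h2⟩; exact ⟨⟨h1, hPW h2⟩, h2⟩
        · rintro ⟨⟨h1, _⟩, h2⟩; exact ⟨h1, h2⟩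
      rw [e1, e2, ← split]
    have hfib : ∀ u ∈ Finset.univ.filter (fun u => u ∈ T ∧ u ∉ P),
        Submodule.span L {v, u} ∈ S := by
      intro u hu
      rw [Finset.mem_filter] at hu
      rw [hSdef, Finset.mem_filter]
      exact ⟨Finset.mem_univ _, L1 u hu.2.2, Submodule.subset_span (by simp)⟩
    have hsum := Finset.card_eq_sum_card_fiberwise hfib
    have c2 : (Finset.univ.filter (fun u => u ∈ T ∧ u ∉ P)).card
        + Nat.card ↥(T ⊓ P.restrictScalars K) = Nat.card ↥T := by
      rw [ncf, ncf]
      have split := Finset.card_filter_add_card_filter_not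
        (s := Finset.univ.filter (· ∈ T)) (p := fun u => u ∉ P)
      rw [Finset.filter_filter, Finset.filter_filter] at split
      have e2 : (Finset.univ.filter (· ∈ T ⊓ P.restrictScalars K))
          = Finset.univ.filter (fun u => u ∈ T ∧ ¬ u ∉ P) := by
        apply Finset.filter_congr
        intro u _
        simp only [Submodule.mem_inf, Submodule.restrictScalars_mem, not_not]
      rw [e2, ← split]
    calc (∑ W ∈ S, Nat.card ↥(T ⊓ W.restrictScalars K))
          + Nat.card ↥(T ⊓ P.restrictScalars K)
        = (∑ W ∈ S, (((Finset.univ.filter (fun u => u ∈ T ∧ u ∉ P)).filter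
              (fun u => Submodule.span L {v, u} = W)).card
            + Nat.card ↥(T ⊓ P.restrictScalars K)))
            + Nat.card ↥(T ⊓ P.restrictScalars K) := by
          rw [Finset.sum_congr rfl (fun W hW => (key W hW).symm)]
      _ = ((Finset.univ.filter (fun u => u ∈ T ∧ u ∉ P)).card
            + S.card * Nat.card ↥(T ⊓ P.restrictScalars K))
            + Nat.card ↥(T ⊓ P.restrictScalars K) := by
          rw [Finset.sum_add_distrib, Finset.sum_const, smul_eq_mul, ← hsum]
      _ = Nat.card ↥T + S.card * Nat.card ↥(T ⊓ P.restrictScalars K) := by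
          rw [← c2]; ring
  -- identity B : counting lines through P
  have hcP : Nat.card ↥((⊤ : Submodule K V) ⊓ P.restrictScalars K) = q ^ n := by
    rw [top_inf_eq, cardT, frW, frP, mul_one]
  have hB := partition ⊤ Submodule.mem_top
  rw [hcP] at hB
  have hBsum : (∑ W ∈ S, Nat.card ↥((⊤ : Submodule K V) ⊓ W.restrictScalars K))
      = S.card * (q ^ n * q ^ n) := by
    rw [Finset.sum_congr rfl (fun W hW => ?_), Finset.sum_const, smul_eq_mul]
    rw [hSdef, Finset.mem_filter] at hW
    rw [top_inf_eq, cardT, frW, hW.2.1, ← pow_add]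
    congr 1
    ring
  have hcV : Nat.card ↥(⊤ : Submodule K V) = q ^ n * q ^ (n * (r - 1)) := by
    rw [cardT, finrank_top, ← Module.finrank_mul_finrank (F := K) (K := L) (A := V),
      hKL, hV, ← pow_add]
    congr 1
    cases r with
    | zero => omega
    | succ m => rw [Nat.add_sub_cancel, Nat.mul_succ]; ring
  rw [hBsum, hcV] at hB
  -- θ(q^n)² + qⁿ = qⁿ·q^{n(r-1)} + θqⁿ  ⇒  θqⁿ + 1 = q^{n(r-1)} + θ
  have hθeq : S.card * q ^ n + 1 = q ^ (n * (r - 1)) + S.card := by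
    have hq : q ^ n * (S.card * q ^ n + 1) = q ^ n * (q ^ (n * (r - 1)) + S.card) := by
      calc q ^ n * (S.card * q ^ n + 1) = S.card * (q ^ n * q ^ n) + q ^ n := by ring
        _ = q ^ n * q ^ (n * (r - 1)) + S.card * q ^ n := hB
        _ = q ^ n * (q ^ (n * (r - 1)) + S.card) := by ring
    exact Nat.eq_of_mul_eq_mul_left (by positivity) hq
  have hθdiv : (q ^ (n * (r - 1)) - 1) / (q ^ n - 1) = S.card := by
    have hms : S.card * (q ^ n - 1) = S.card * q ^ n - S.card := by
      rw [Nat.mul_sub, mul_one]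
    have hle : S.card ≤ S.card * q ^ n := Nat.le_mul_of_pos_right _ (by positivity)
    have h2 : q ^ (n * (r - 1)) - 1 = S.card * (q ^ n - 1) := by
      rw [hms]
      omega
    rw [h2, Nat.mul_div_cancel _ (by omega : 0 < q ^ n - 1)]
  -- identity A : weights of lines through P
  have hcUP : Nat.card ↥(U ⊓ P.restrictScalars K) = q := by
    rw [cardT, hw, pow_one]
  have hA := partition U hvU
  rw [hcUP, cardT, hU] at hA
  have hA2 : (∑ W ∈ S, q ^ (Module.finrank K ↥(U ⊓ W.restrictScalars K))) + q
      = q ^ ((r - 2) * n + k) + S.card * q := by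
    rw [Finset.sum_congr rfl (fun W _ => (cardT _).symm)]
    exact hA
  -- the finset of points of the linear set
  set PF : Finset (Submodule L V) :=
    Finset.univ.filter (fun Q => ∃ u ∈ U, u ≠ 0 ∧ Q = Submodule.span L {u}) with hPFdef
  have hgoalcard : {Q : Submodule L V | ∃ u ∈ U, u ≠ 0 ∧ Q = Submodule.span L {u}}.ncard
      = PF.card := by
    have e : {Q : Submodule L V | ∃ u ∈ U, u ≠ 0 ∧ Q = Submodule.span L {u}} = ↑PF := by
      ext Q
      simp [hPFdef]
    rw [e, Set.ncard_coe_finset]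
  have hPmem : P ∈ PF := by
    rw [hPFdef, Finset.mem_filter]
    exact ⟨Finset.mem_univ _, v, hvU, hv, rfl⟩
  have hlcard : ∀ W : Submodule L V,
      {Q : Submodule L V | (∃ u ∈ U, u ≠ 0 ∧ Q = Submodule.span L {u}) ∧ Q ≤ W}.ncard
        = (PF.filter (· ≤ W)).card := by
    intro W
    have e : {Q : Submodule L V | (∃ u ∈ U, u ≠ 0 ∧ Q = Submodule.span L {u}) ∧ Q ≤ W}
        = ↑(PF.filter (· ≤ W)) := by
      ext Q
      simp [hPFdef, and_assoc]
    rw [e, Set.ncard_coe_finset]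
  have hnotP : ∀ u : V, u ≠ 0 → Submodule.span L {u} ≠ P → u ∉ P := by
    intro u hu0 hne hmem
    apply hne
    rw [hPdef]
    apply Submodule.eq_of_le_of_finrank_le
    · exact Submodule.span_le.2 (by simpa using hmem)
    · rw [finrank_span_singleton hv, finrank_span_singleton hu0]
  -- partition of the points ≠ P by the lines through P
  have keyC : ∀ W ∈ S, (PF.filter (· ≤ W)).card
      = ((PF.erase P).filter (fun Q => P ⊔ Q = W)).card + 1 := by
    intro W hW
    rw [hSdef, Finset.mem_filter] at hW
    obtain ⟨-, hW2, hvW⟩ := hW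
    have hPW : P ≤ W := by rw [hPdef]; exact Submodule.span_le.2 (by simp [hvW])
    have e : PF.filter (· ≤ W) = insert P ((PF.erase P).filter (fun Q => P ⊔ Q = W)) := by
      ext Q
      simp only [Finset.mem_filter, Finset.mem_insert, Finset.mem_erase]
      constructor
      · rintro ⟨hQPF, hQW⟩
        by_cases hQP : Q = P
        · exact Or.inl hQP
        · refine Or.inr ⟨⟨hQP, hQPF⟩, ?_⟩
          have hQPF' := hQPF
          rw [hPFdef, Finset.mem_filter] at hQPF'
          obtain ⟨-, u, huU, hu0, rfl⟩ := hQPF'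
          have huP : u ∉ P := hnotP u hu0 hQP
          have huW : u ∈ W := hQW (Submodule.mem_span_singleton_self u)
          have hsup : P ⊔ Submodule.span L {u} = Submodule.span L {v, u} := by
            rw [hPdef, ← Submodule.span_union, Set.singleton_union]
          rw [hsup]
          exact L2 u W huP hW2 hvW huW
      · rintro (rfl | ⟨⟨hne, hQPF⟩, hsup⟩)
        · exact ⟨hPmem, hPW⟩
        · exact ⟨hQPF, le_trans le_sup_right hsup.le⟩
    rw [e, Finset.card_insert_of_notMem (by simp)]
  have hfibC : ∀ Q ∈ PF.erase P, P ⊔ Q ∈ S := by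
    intro Q hQ
    rw [Finset.mem_erase] at hQ
    obtain ⟨hne, hQPF⟩ := hQ
    rw [hPFdef, Finset.mem_filter] at hQPF
    obtain ⟨-, u, huU, hu0, rfl⟩ := hQPF
    have huP : u ∉ P := hnotP u hu0 hne
    have hsup : P ⊔ Submodule.span L {u} = Submodule.span L {v, u} := by
      rw [hPdef, ← Submodule.span_union, Set.singleton_union]
    rw [hsup, hSdef, Finset.mem_filter]
    exact ⟨Finset.mem_univ _, L1 u huP, Submodule.subset_span (by simp)⟩
  have hsumC := Finset.card_eq_sum_card_fiberwise hfibC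
  -- collect : #PF = Σ_{W ∈ S} (#(points on W) - 1) + 1
  have hcollect : (∑ W ∈ S, (PF.filter (· ≤ W)).card) + 1 = PF.card + S.card := by
    rw [Finset.sum_congr rfl keyC, Finset.sum_add_distrib, Finset.sum_const, smul_eq_mul,
      mul_one, ← hsumC, Finset.card_erase_of_mem hPmem]
    have hpos : 0 < PF.card := Finset.card_pos.2 ⟨P, hPmem⟩
    omega
  -- lower bound from hlines
  have hlb : (∑ W ∈ S, (q ^ (Module.finrank K ↥(U ⊓ W.restrictScalars K) - 1) + 1))
      ≤ ∑ W ∈ S, (PF.filter (· ≤ W)).card := by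
    apply Finset.sum_le_sum
    intro W hW
    rw [hSdef, Finset.mem_filter] at hW
    have := hlines W hW.2.1 hW.2.2
    rwa [hlcard W] at this
  rw [Finset.sum_add_distrib, Finset.sum_const, smul_eq_mul, mul_one] at hlb
  -- each line through P has weight ≥ 1
  have hwpos : ∀ W ∈ S, q * q ^ (Module.finrank K ↥(U ⊓ W.restrictScalars K) - 1)
      = q ^ (Module.finrank K ↥(U ⊓ W.restrictScalars K)) := by
    intro W hW
    rw [hSdef, Finset.mem_filter] at hW
    have hvm : v ∈ U ⊓ W.restrictScalars K := ⟨hvU, hW.2.2⟩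
    haveI : Nontrivial ↥(U ⊓ W.restrictScalars K) :=
      nontrivial_of_ne ⟨v, hvm⟩ 0 (by simp [hv, Submodule.mk_eq_zero])
    have hpos : 0 < Module.finrank K ↥(U ⊓ W.restrictScalars K) :=
      Module.finrank_pos
    rw [← pow_succ']
    congr 1
    omega
  -- exact value of Σ q^{h_W - 1}
  have hS1 : (∑ W ∈ S, q ^ (Module.finrank K ↥(U ⊓ W.restrictScalars K) - 1)) + 1
      = q ^ ((r - 2) * n + k - 1) + S.card := by
    apply Nat.eq_of_mul_eq_mul_left (show 0 < q by omega)
    rw [Nat.mul_add, Nat.mul_add, Finset.mul_sum, Finset.sum_congr rfl hwpos, mul_one]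
    rw [hA2]
    have : q * q ^ ((r - 2) * n + k - 1) = q ^ ((r - 2) * n + k) := by
      rw [← pow_succ']
      congr 1
      omega
    rw [this]
    ring
  rw [hgoalcard, hθdiv, ← hS1]
  omega
end

section
/- Let $V = V_0 \oplus V_1 \oplus \cdots \oplus V_{n-1}$ be a vector space over $\mathbb{F}_{q^n}$ with each $V_i$ of dimension $r$, and let $\sigma$ be an $\mathbb{F}_q$-semilinear map of $V$ (with field automorphism $x \mapsto x^q$) of order $n$ mapping $V_i$ onto $V_{i+1}$ (indices mod $n$). Let $v = v_0 + v_1 + \cdots + v_{n-1}$ with $v_i \in V_i$, and suppose $\dim_{\mathbb{F}_{q^n}} \langle v, v^{\sigma}, \ldots, v^{\sigma^{n-1}} \rangle = k$ with $0 < k < n$. Then for each $i \in \{0, 1, \ldots, n-k-1\}$, the vector $v_{k+i}$ is a nontrivial $\mathbb{F}_{q^n}$-linear combination of $v_0^{\sigma^{k+i}}, v_1^{\sigma^{k+i-1}}, \ldots, v_{k-1}^{\sigma^{i+1}}$. -/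
set_option maxHeartbeats 1600000 in
set_option synthInstance.maxHeartbeats 400000 in
/-- Technical lemma on the cyclic representation: if `v = v_0 + ⋯ + v_{n-1}` with
`v_i ∈ V_i` and `dim ⟨v, v^σ, …, v^{σ^{n-1}}⟩ = k`, `0 < k < n`, then for each
`i ≤ n - k - 1` the vector `v_{k+i}` is a nontrivial linear combination of
`v_0^{σ^{k+i}}, v_1^{σ^{k+i-1}}, …, v_{k-1}^{σ^{i+1}}`. -/
theorem stmt_10 (q n r : ℕ) (hn : 0 < n) (L : Type*) [Field L] [Fintype L]
    (hL : Fintype.card L = q ^ n)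
    (V : Type*) [AddCommGroup V] [Module L V]
    (Vi : Fin n → Submodule L V) (hdim : ∀ i, Module.finrank L (Vi i) = r)
    (hindep : iSupIndep Vi) (hsup : (⨆ i, Vi i) = ⊤)
    (σ : V → V) (hadd : ∀ x y : V, σ (x + y) = σ x + σ y)
    (hsmul : ∀ (a : L) (x : V), σ (a • x) = a ^ q • σ x)
    (hord : σ^[n] = id)
    (hmap : ∀ i : Fin n, σ '' (Vi i) = Vi ⟨((i : ℕ) + 1) % n, Nat.mod_lt _ hn⟩)
    (vv : Fin n → V) (hv : ∀ i, vv i ∈ Vi i)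
    (k : ℕ) (hk0 : 0 < k) (hkn : k < n)
    (hdimspan : Module.finrank L
      (Submodule.span L (Set.range fun j : Fin n => σ^[(j : ℕ)] (∑ i, vv i))) = k)
    (i : ℕ) (hi : i ≤ n - k - 1) :
    ∃ c : Fin k → L, (∃ l, c l ≠ 0) ∧
      vv ⟨k + i, by omega⟩ =
        ∑ l : Fin k, c l • σ^[k + i - (l : ℕ)] (vv (Fin.castLE (by omega) l)) := by
  classical
  haveI : NeZero n := ⟨hn.ne'⟩
  set v : V := ∑ t, vv t with hv0
  -- basic facts about σ
  have hσ0 : σ 0 = 0 := by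
    have h := hadd 0 0
    rw [add_zero] at h
    exact (left_eq_add.mp h)
  have hiter0 : ∀ m, σ^[m] (0 : V) = 0 := fun m => Function.iterate_fixed hσ0 m
  have hitadd : ∀ m (x y : V), σ^[m] (x + y) = σ^[m] x + σ^[m] y := by
    intro m
    induction m with
    | zero => intro x y; simp
    | succ m ih =>
      intro x y
      rw [Function.iterate_succ_apply', Function.iterate_succ_apply',
        Function.iterate_succ_apply', ih, hadd]
  -- shift of spans under σ
  have hshift : ∀ (m : ℕ) (w : Fin m → V) (u : V),
      u ∈ Submodule.span L (Set.range w) →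
      σ u ∈ Submodule.span L (Set.range fun l => σ (w l)) := by
    intro m w u hu
    rw [Submodule.mem_span_range_iff_exists_fun] at hu ⊢
    obtain ⟨c, hc⟩ := hu
    refine ⟨fun l => c l ^ q, ?_⟩
    have hsum : σ (∑ j, c j • w j) = ∑ j, σ (c j • w j) :=
      map_sum (AddMonoidHom.mk' σ hadd) _ _
    rw [← hc, hsum]
    exact Finset.sum_congr rfl fun l _ => (hsmul (c l) (w l)).symm
  have hshiftIter : ∀ (s m : ℕ) (w : Fin m → V) (u : V),
      u ∈ Submodule.span L (Set.range w) →
      σ^[s] u ∈ Submodule.span L (Set.range fun l => σ^[s] (w l)) := by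
    intro s
    induction s with
    | zero => intro m w u hu; simpa using hu
    | succ s ih =>
      intro m w u hu
      have h := hshift m (fun l => σ^[s] (w l)) _ (ih m w u hu)
      simpa [Function.iterate_succ_apply'] using h
  -- the chain of spans
  set D : ℕ → Submodule L V :=
    fun m => Submodule.span L (Set.range fun l : Fin m => σ^[(l : ℕ)] v) with hD
  have hfrDn : Module.finrank L (D n) = k := hdimspan
  have hDstep : ∀ m, σ^[m] v ∈ D m → ∀ j, σ^[j] v ∈ D m := by
    intro m hm j
    induction j with
    | zero =>
      rcases Nat.eq_zero_or_pos m with rfl | hmpos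
      · exact hm
      · exact Submodule.subset_span ⟨⟨0, hmpos⟩, rfl⟩
    | succ j ih =>
      have h1 : σ (σ^[j] v) ∈
          Submodule.span L (Set.range fun l : Fin m => σ (σ^[(l : ℕ)] v)) :=
        hshift m _ _ ih
      have h2 : Submodule.span L (Set.range fun l : Fin m => σ (σ^[(l : ℕ)] v)) ≤ D m := by
        rw [Submodule.span_le]
        rintro _ ⟨l, rfl⟩
        show σ (σ^[(l : ℕ)] v) ∈ D m
        have e : σ (σ^[(l : ℕ)] v) = σ^[(l : ℕ) + 1] v :=
          (Function.iterate_succ_apply' σ (l : ℕ) v).symm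
        rw [e]
        rcases lt_or_eq_of_le (Nat.succ_le_of_lt l.2) with h | h
        · exact Submodule.subset_span ⟨⟨(l : ℕ) + 1, h⟩, rfl⟩
        · rw [show (l : ℕ) + 1 = m from h]; exact hm
      rw [Function.iterate_succ_apply']
      exact h2 h1
  -- minimal m with a dependence
  have hTn : σ^[n] v ∈ D n := by
    have e : σ^[n] v = σ^[(0 : ℕ)] v := by rw [hord]; rfl
    rw [e]
    exact Submodule.subset_span ⟨⟨0, hn⟩, rfl⟩
  have hexists : ∃ m, σ^[m] v ∈ D m := ⟨n, hTn⟩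
  set m := Nat.find hexists with hmdef
  have hmem : σ^[m] v ∈ D m := Nat.find_spec hexists
  have hnotl : ∀ j, j < m → σ^[j] v ∉ D j := fun j hj => Nat.find_min hexists hj
  have hmn : m ≤ n := Nat.find_min' hexists hTn
  -- the first m iterates are linearly independent
  have hli : ∀ a, a ≤ m → LinearIndependent L (fun l : Fin a => σ^[(l : ℕ)] v) := by
    intro a
    induction a with
    | zero => intro _; exact linearIndependent_empty_type
    | succ a ih =>
      intro ha
      have e : (fun l : Fin (a + 1) => σ^[(l : ℕ)] v) =
          Fin.snoc (fun l : Fin a => σ^[(l : ℕ)] v) (σ^[a] v) := by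
        funext l
        induction l using Fin.lastCases with
        | last => simp
        | cast l => simp
      rw [e, linearIndependent_fin_snoc]
      exact ⟨ih (Nat.le_of_succ_le ha), hnotl a (Nat.lt_of_succ_le ha)⟩
  have hfrDm : Module.finrank L (D m) = m := by
    have := finrank_span_eq_card (hli m le_rfl)
    simpa using this
  -- k = m
  have hDn_le : D n ≤ D m := by
    rw [hD, Submodule.span_le]
    rintro _ ⟨j, rfl⟩
    exact hDstep m hmem j
  have hDm_le : D m ≤ D n := by
    rw [hD, Submodule.span_le]
    rintro _ ⟨l, rfl⟩
    exact Submodule.subset_span ⟨⟨(l : ℕ), lt_of_lt_of_le l.2 hmn⟩, rfl⟩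
  have hDeq : D m = D n := le_antisymm hDm_le hDn_le
  have hkm : k = m := by rw [← hfrDn, ← hDeq, hfrDm]
  -- all iterates lie in D k
  have hmemk : σ^[k] v ∈ D k := by rw [hkm]; exact hmem
  have hall : ∀ j, σ^[j] v ∈ D k := hDstep k hmemk
  -- v lies in the span of σ^[i+1+l] v, l < k
  have hvrep : v = σ^[i + 1] (σ^[n - i - 1] v) := by
    rw [← Function.iterate_add_apply]
    have e : i + 1 + (n - i - 1) = n := by omega
    rw [e, hord]
    rfl
  have hvE : v ∈ Submodule.span L (Set.range fun l : Fin k => σ^[i + 1] (σ^[(l : ℕ)] v)) := by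
    have h := hshiftIter (i + 1) k (fun l : Fin k => σ^[(l : ℕ)] v)
      (σ^[n - i - 1] v) (hall (n - i - 1))
    rw [← hvrep] at h
    exact h
  rw [Submodule.mem_span_range_iff_exists_fun] at hvE
  obtain ⟨c', hc'⟩ := hvE
  -- v is nonzero
  have hvne : v ≠ 0 := by
    intro h0
    have hbot : Submodule.span L (Set.range fun j : Fin n => σ^[(j : ℕ)] v) = ⊥ := by
      rw [Submodule.span_eq_bot]
      rintro _ ⟨j, rfl⟩
      rw [h0]
      exact hiter0 _
    rw [hbot] at hdimspan
    simp at hdimspan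
    omega
  -- uniqueness of components in the direct sum decomposition
  have huniq : ∀ f : (t : Fin n) → Vi t, (∑ t, (f t : V)) = 0 → ∀ t, f t = 0 := by
    intro f hf t
    have hint : DirectSum.IsInternal Vi :=
      DirectSum.isInternal_submodule_of_iSupIndep_of_iSup_eq_top hindep hsup
    have hx : (∑ s, DirectSum.of (fun t : Fin n => Vi t) s (f s)) = 0 := by
      apply hint.injective
      rw [map_sum, map_zero]
      simpa [DirectSum.coeAddMonoidHom_of] using hf
    have hxt := congrArg (DirectSum.component L (Fin n) (fun t : Fin n => Vi t) t) hx
    rw [map_sum, map_zero] at hxt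
    simpa [← DirectSum.apply_eq_component, DirectSum.of_apply, Finset.sum_dite_eq] using hxt
  -- membership of iterated images
  have hmem' : ∀ (a : ℕ) (j : Fin n) (x : V), x ∈ Vi j →
      σ^[a] x ∈ Vi ⟨((j : ℕ) + a) % n, Nat.mod_lt _ hn⟩ := by
    intro a
    induction a with
    | zero =>
      intro j x hx
      have e : (⟨((j : ℕ) + 0) % n, Nat.mod_lt _ hn⟩ : Fin n) = j := by
        apply Fin.ext
        simp [Nat.mod_eq_of_lt j.2]
      rw [e]
      exact hx
    | succ a ih =>
      intro j x hx
      have h1 := ih j x hx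
      have h2 : σ (σ^[a] x) ∈
          Vi ⟨((((j : ℕ) + a) % n) + 1) % n, Nat.mod_lt _ hn⟩ := by
        have h2' : σ (σ^[a] x) ∈
            σ '' (Vi ⟨((j : ℕ) + a) % n, Nat.mod_lt _ hn⟩ : Set V) := ⟨_, h1, rfl⟩
        rw [hmap ⟨((j : ℕ) + a) % n, Nat.mod_lt _ hn⟩] at h2'
        exact h2'
      have e : (⟨((((j : ℕ) + a) % n) + 1) % n, Nat.mod_lt _ hn⟩ : Fin n)
          = ⟨((j : ℕ) + (a + 1)) % n, Nat.mod_lt _ hn⟩ := by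
        apply Fin.ext
        show ((((j : ℕ) + a) % n) + 1) % n = ((j : ℕ) + (a + 1)) % n
        have h3 : (((j : ℕ) + a) % n + 1) % n = (((j : ℕ) + a) + 1) % n :=
          Nat.ModEq.add_right 1 (Nat.mod_modEq ((j : ℕ) + a) n)
        rw [h3, Nat.add_assoc]
      rw [Function.iterate_succ_apply', ← e]
      exact h2
  -- arithmetic helper
  have hidx : ∀ (a : ℕ) (s : Fin n),
      ((n - a % n + (s : ℕ)) % n + a) % n = (s : ℕ) := by
    intro a s
    have h1 : ((n - a % n + (s : ℕ)) % n + a) % n = (n - a % n + (s : ℕ) + a) % n :=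
      Nat.ModEq.add_right a (Nat.mod_modEq _ n)
    have h2 : a % n + n * (a / n) = a := Nat.mod_add_div a n
    have h3 : a % n < n := Nat.mod_lt _ hn
    have h4 : n - a % n + (s : ℕ) + a = (s : ℕ) + n * (1 + a / n) := by
      rw [Nat.mul_add, Nat.mul_one]
      generalize n * (a / n) = d at h2 ⊢
      omega
    rw [h1, h4, Nat.add_mul_mod_self_left, Nat.mod_eq_of_lt s.2]
  -- the componentwise difference
  set g : Fin n → V := fun s =>
    vv s - ∑ l : Fin k, c' l •
      σ^[i + 1 + (l : ℕ)] (vv (s - ⟨(i + 1 + (l : ℕ)) % n, Nat.mod_lt _ hn⟩)) with hg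
  have hgmem : ∀ s : Fin n, g s ∈ Vi s := by
    intro s
    apply Submodule.sub_mem
    · exact hv s
    · apply Submodule.sum_mem
      intro l _
      apply Submodule.smul_mem
      have hm1 := hmem' (i + 1 + (l : ℕ))
        (s - ⟨(i + 1 + (l : ℕ)) % n, Nat.mod_lt _ hn⟩) _ (hv _)
      have e : (⟨(((s - ⟨(i + 1 + (l : ℕ)) % n, Nat.mod_lt _ hn⟩ : Fin n) : ℕ)
            + (i + 1 + (l : ℕ))) % n, Nat.mod_lt _ hn⟩ : Fin n) = s := by
        apply Fin.ext
        rw [Fin.sub_def]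
        exact hidx (i + 1 + (l : ℕ)) s
      rw [e] at hm1
      exact hm1
  have hsum0 : ∑ s, g s = 0 := by
    rw [hg, Finset.sum_sub_distrib]
    have h5 : (∑ s : Fin n, ∑ l : Fin k, c' l •
          σ^[i + 1 + (l : ℕ)] (vv (s - ⟨(i + 1 + (l : ℕ)) % n, Nat.mod_lt _ hn⟩)))
        = ∑ l : Fin k, c' l • σ^[i + 1] (σ^[(l : ℕ)] v) := by
      rw [Finset.sum_comm]
      refine Finset.sum_congr rfl fun l _ => ?_
      rw [← Finset.smul_sum]
      congr 1
      have e2 : σ^[i + 1] (σ^[(l : ℕ)] v) = σ^[i + 1 + (l : ℕ)] v :=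
        (Function.iterate_add_apply σ (i + 1) (l : ℕ) v).symm
      have e3 : (∑ s : Fin n,
            σ^[i + 1 + (l : ℕ)] (vv (s - ⟨(i + 1 + (l : ℕ)) % n, Nat.mod_lt _ hn⟩)))
          = ∑ t : Fin n, σ^[i + 1 + (l : ℕ)] (vv t) :=
        Fintype.sum_equiv (Equiv.subRight (⟨(i + 1 + (l : ℕ)) % n, Nat.mod_lt _ hn⟩ : Fin n))
          _ _ (fun s => rfl)
      have e4 : σ^[i + 1 + (l : ℕ)] (∑ t, vv t) = ∑ t, σ^[i + 1 + (l : ℕ)] (vv t) :=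
        map_sum (AddMonoidHom.mk' (σ^[i + 1 + (l : ℕ)]) (hitadd _)) _ _
      rw [e3, e2, hv0, e4]
    rw [h5, hc', sub_self]
  -- extract the component at k + i
  have hg0 : g ⟨k + i, by omega⟩ = 0 := by
    have := huniq (fun s => ⟨g s, hgmem s⟩) hsum0 ⟨k + i, by omega⟩
    exact congrArg Subtype.val this
  rw [hg] at hg0
  have hEst : vv ⟨k + i, by omega⟩ = ∑ l : Fin k, c' l •
      σ^[i + 1 + (l : ℕ)] (vv ((⟨k + i, by omega⟩ : Fin n)
        - ⟨(i + 1 + (l : ℕ)) % n, Nat.mod_lt _ hn⟩)) := by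
    exact sub_eq_zero.mp hg0
  -- simplify the subtracted index
  have hsub : ∀ l : Fin k, ((⟨k + i, by omega⟩ : Fin n)
      - ⟨(i + 1 + (l : ℕ)) % n, Nat.mod_lt _ hn⟩ : Fin n)
      = ⟨k - 1 - (l : ℕ), by omega⟩ := by
    intro l
    have hl : (l : ℕ) < k := l.2
    apply Fin.ext
    rw [Fin.sub_def]
    show (n - (i + 1 + (l : ℕ)) % n + (k + i)) % n = k - 1 - (l : ℕ)
    have e1 : (i + 1 + (l : ℕ)) % n = i + 1 + (l : ℕ) := Nat.mod_eq_of_lt (by omega)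
    rw [e1]
    have e2 : n - (i + 1 + (l : ℕ)) + (k + i) = n + (k - 1 - (l : ℕ)) := by omega
    rw [e2, Nat.add_mod_left, Nat.mod_eq_of_lt (by omega)]
  simp only [hsub] at hEst
  -- assemble the answer
  refine ⟨fun j => c' j.rev, ?_, ?_⟩
  · obtain ⟨l, hl⟩ : ∃ l, c' l ≠ 0 := by
      by_contra hno
      push_neg at hno
      apply hvne
      rw [← hc']
      exact Finset.sum_eq_zero fun l _ => by rw [hno l, zero_smul]
    refine ⟨l.rev, ?_⟩
    show c' l.rev.rev ≠ 0
    rw [Fin.rev_rev]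
    exact hl
  · rw [hEst]
    refine Fintype.sum_equiv Fin.revPerm _ _ fun j => ?_
    have hj : (j : ℕ) < k := j.2
    have er : (j.rev : ℕ) = k - 1 - (j : ℕ) := by rw [Fin.val_rev]; omega
    simp only [Fin.revPerm_apply, Fin.rev_rev]
    have e1 : k + i - ((j.rev : Fin k) : ℕ) = i + 1 + (j : ℕ)  := by rw [er]; omega
    have e2 : (Fin.castLE (by omega) j.rev : Fin n) = ⟨k - 1 - (j : ℕ), by omega⟩ := by
      apply Fin.ext
      show ((j.rev : Fin k) : ℕ) = k - 1 - (j : ℕ)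
      exact er
    rw [e1, e2]
end

section
/- Let $U$ be an $m$-dimensional $\mathbb{F}_q$-subspace of an $r$-dimensional $\mathbb{F}_{q^n}$-vector space $V$, with $m = an$ for some $1 \leq a \leq r-1$. Then there exists an $(r-a)$-dimensional $\mathbb{F}_{q^n}$-subspace $W$ of $V$ such that $W \cap U = \{0\}$. -/
open Module


/-- If `U` is an `an`-dimensional `F_q`-subspace of an `r`-dimensional
`F_{q^n}`-vector space, `1 ≤ a ≤ r - 1`, then there is an `(r-a)`-dimensional
`F_{q^n}`-subspace `W` with `W ∩ U = {0}`. -/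
theorem stmt_12 (q n r a : ℕ) (K L : Type*) [Field K] [Field L] [Algebra K L]
    [Fintype K] [Fintype L] (hK : Fintype.card K = q) (hL : Fintype.card L = q ^ n)
    (V : Type*) [AddCommGroup V] [Module L V] [Module K V] [IsScalarTower K L V]
    [Module.Finite L V]
    (hV : Module.finrank L V = r)
    (U : Submodule K V) (hU : Module.finrank K U = a * n)
    (ha1 : 1 ≤ a) (ha2 : a ≤ r - 1) :
    ∃ W : Submodule L V, Module.finrank L W = r - a ∧
      W.restrictScalars K ⊓ U = ⊥ := by
  classical
  have hq : 2 ≤ q := hK ▸ Fintype.one_lt_card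
  have hn : 1 ≤ n := by
    rcases Nat.eq_zero_or_pos n with h0 | h0
    · rw [h0, pow_zero] at hL
      have h2 : (1:ℕ) < Fintype.card L := Fintype.one_lt_card
      omega
    · exact h0
  have har : a + 1 ≤ r := by
    rcases Nat.eq_zero_or_pos r with h0 | h0
    · omega
    · omega
  haveI : Finite V := Module.finite_of_finite L
  haveI : Fintype V := Fintype.ofFinite V
  -- card of V
  have cardV : Fintype.card V = q ^ (n * r) := by
    rw [Module.card_fintype (Module.finBasis L V), hL, Fintype.card_fin, hV, ← pow_mul]
  -- card of U
  haveI : Module.Finite K U := Module.Finite.of_finite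
  have cardU : Fintype.card U = q ^ (a * n) := by
    rw [Module.card_fintype (Module.finBasis K U), hK, Fintype.card_fin, hU]
  -- the key induction
  suffices h : ∀ k, k ≤ r - a → ∃ W : Submodule L V, Module.finrank L W = k ∧
      W.restrictScalars K ⊓ U = ⊥ by
    exact h (r - a) le_rfl
  intro k
  induction k with
  | zero =>
    intro _
    refine ⟨⊥, finrank_bot L V, ?_⟩
    rw [Submodule.restrictScalars_bot, bot_inf_eq]
  | succ k ih =>
    intro hk
    obtain ⟨W, hWrank, hWU⟩ := ih (by omega)
    -- finset of nonzero elements of U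
    set s : Finset V := (Set.toFinset (U : Set V)).erase 0 with hs
    have hcs : s.card = q ^ (a * n) - 1 := by
      rw [hs, Finset.card_erase_of_mem (by simp [Set.mem_toFinset]), Set.toFinset_card]
      rw [show Fintype.card (U : Set V) = Fintype.card U from Fintype.card_congr (Equiv.refl _)]
      rw [cardU]
    -- bad set
    set B : Finset V := s.biUnion (fun u => Set.toFinset ((W ⊔ Submodule.span L {u} : Submodule L V) : Set V)) with hB
    have hcard_piece : ∀ u ∈ s, (Set.toFinset ((W ⊔ Submodule.span L {u} : Submodule L V) : Set V)).card ≤ q ^ (n * (k + 1)) := by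
      intro u hu
      set Wu : Submodule L V := W ⊔ Submodule.span L {u}
      have hrank : finrank L Wu ≤ k + 1 := by
        have h1 : finrank L Wu + finrank L ((W ⊓ Submodule.span L {u} : Submodule L V)) =
            finrank L W + finrank L (Submodule.span L {u}) :=
          Submodule.finrank_sup_add_finrank_inf_eq W (Submodule.span L {u})
        have hune : u ≠ 0 := (Finset.mem_erase.1 hu).1
        have h2 : finrank L (Submodule.span L ({u} : Set V)) = 1 := finrank_span_singleton hune
        omega
      rw [Set.toFinset_card,
        show Fintype.card ((Wu : Set V)) = Fintype.card Wu from Fintype.card_congr (Equiv.refl _),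
        Module.card_fintype (Module.finBasis L Wu), hL, Fintype.card_fin, ← pow_mul]
      exact Nat.pow_le_pow_right (by omega) (Nat.mul_le_mul_left n hrank)
    have hBcard : B.card < Fintype.card V := by
      have h1 : B.card ≤ ∑ u ∈ s, (Set.toFinset ((W ⊔ Submodule.span L {u} : Submodule L V) : Set V)).card :=
        Finset.card_biUnion_le
      have h2 : ∑ u ∈ s, (Set.toFinset ((W ⊔ Submodule.span L {u} : Submodule L V) : Set V)).card
          ≤ s.card * q ^ (n * (k + 1)) := by
        calc _ ≤ ∑ _u ∈ s, q ^ (n * (k + 1)) := Finset.sum_le_sum hcard_piece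
        _ = s.card * q ^ (n * (k + 1)) := by rw [Finset.sum_const, smul_eq_mul]
      rw [cardV]
      have hle : q ^ (a * n) * q ^ (n * (k + 1)) ≤ q ^ (n * r) := by
        rw [← pow_add]
        refine Nat.pow_le_pow_right (by omega) ?_
        have h3 : a + (k + 1) ≤ r := by omega
        calc a * n + n * (k + 1) = n * (a + (k + 1)) := by ring
          _ ≤ n * r := Nat.mul_le_mul_left n h3
      have hpos : 1 ≤ q ^ (n * (k + 1)) := Nat.one_le_pow _ _ (by omega)
      calc B.card ≤ s.card * q ^ (n * (k + 1)) := le_trans h1 h2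
        _ = (q ^ (a * n) - 1) * q ^ (n * (k + 1)) := by rw [hcs]
        _ = q ^ (a * n) * q ^ (n * (k + 1)) - q ^ (n * (k + 1)) := by
            rw [Nat.sub_mul, one_mul]
        _ < q ^ (n * r) := by
            have htp : q ^ (n * (k + 1)) ≤ q ^ (a * n) * q ^ (n * (k + 1)) :=
              Nat.le_mul_of_pos_left _ (by positivity)
            omega
    -- find a good vector
    obtain ⟨v, hv⟩ : ∃ v : V, v ∉ B := by
      by_contra h
      push_neg at h
      have h2 := Finset.card_le_card (fun x _ => h x : (Finset.univ : Finset V) ⊆ B)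
      rw [Finset.card_univ] at h2
      omega
    -- U is nonzero, so s is nonempty, so v ∉ W
    have hUne : ∃ u : V, u ∈ s := by
      have hUbot : U ≠ ⊥ := by
        intro hbot
        rw [hbot] at hU
        simp only [finrank_bot] at hU
        have := Nat.mul_pos ha1 hn
        omega
      obtain ⟨u, hu, hune⟩ := Submodule.exists_mem_ne_zero_of_ne_bot hUbot
      exact ⟨u, Finset.mem_erase.2 ⟨hune, Set.mem_toFinset.2 hu⟩⟩
    have hvW : v ∉ W := by
      obtain ⟨u, hu⟩ := hUne
      intro hvw
      exact hv (Finset.mem_biUnion.2 ⟨u, hu, by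
        simp only [Set.mem_toFinset, SetLike.mem_coe]
        exact Submodule.mem_sup_left hvw⟩)
    have hv0 : v ≠ 0 := fun h => hvW (h ▸ W.zero_mem)
    refine ⟨W ⊔ Submodule.span L {v}, ?_, ?_⟩
    · have hinf : (W ⊓ Submodule.span L {v} : Submodule L V) = ⊥ := by
        rw [eq_bot_iff]
        intro x hx
        obtain ⟨hxW, hxs⟩ := hx
        obtain ⟨c, rfl⟩ := Submodule.mem_span_singleton.1 hxs
        rcases eq_or_ne c 0 with rfl | hc
        · simp
        · exact absurd (by simpa [hc] using W.smul_mem c⁻¹ hxW) hvW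
      have := Submodule.finrank_sup_add_finrank_inf_eq W (Submodule.span L {v})
      rw [hinf, finrank_bot, finrank_span_singleton hv0, hWrank] at this
      omega
    · rw [eq_bot_iff]
      rintro x ⟨hx1, hx2⟩
      obtain ⟨y, hy, z, hz, rfl⟩ := Submodule.mem_sup.1 hx1
      obtain ⟨c, rfl⟩ := Submodule.mem_span_singleton.1 hz
      rcases eq_or_ne c 0 with rfl | hc
      · simp only [zero_smul, add_zero] at hx2 ⊢
        have : y ∈ W.restrictScalars K ⊓ U := ⟨hy, hx2⟩
        rw [hWU] at this
        exact this
      · exfalso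
        apply hv
        have hx0 : y + c • v ≠ 0 := by
          intro h0
          apply hvW
          have : c • v = -y := by linear_combination (norm := abel) h0
          have : v = c⁻¹ • (-y) := by rw [← this, smul_smul, inv_mul_cancel₀ hc, one_smul]
          rw [this]
          exact W.smul_mem _ (W.neg_mem hy)
        refine Finset.mem_biUnion.2 ⟨y + c • v, ?_, ?_⟩
        · exact Finset.mem_erase.2 ⟨hx0, Set.mem_toFinset.2 hx2⟩
        · simp only [Set.mem_toFinset, SetLike.mem_coe]
          have hmem : c⁻¹ • (y + c • v) - c⁻¹ • y ∈ W ⊔ Submodule.span L {y + c • v} :=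
            Submodule.sub_mem _
              (Submodule.smul_mem _ _ (Submodule.mem_sup_right (Submodule.mem_span_singleton_self _)))
              (Submodule.smul_mem _ _ (Submodule.mem_sup_left hy))
          simpa [smul_add, smul_smul, inv_mul_cancel₀ hc, add_sub_cancel_left] using hmem
end

section
/- Let $\mathrm{Tr}: \mathbb{F}_{q^3} \to \mathbb{F}_q$ be the trace map and let $U = \{(x, y) : x, y \in \mathbb{F}_{q^3}, \mathrm{Tr}(y) = 0\}$, an $\mathbb{F}_q$-subspace of $V = \mathbb{F}_{q^6}^2$ of dimension $5$ over $\mathbb{F}_q$. Then for every nonzero $v \in U$, $\dim_{\mathbb{F}_q}(U \cap \langle v \rangle_{\mathbb{F}_{q^6}}) \geq 2$; more precisely, if $v = (x,y)$ with $y \neq 0$ the weight is exactly $2$, and if $y = 0$ the weight is $3$. -/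
theorem aux_finrank {K M N : Type*} [Field K] [AddCommGroup M] [Module K M]
    [AddCommGroup N] [Module K N] (f : M →ₗ[K] N) (hf : Function.Injective f)
    (P : Submodule K N) (h : LinearMap.range f = P) :
    Module.finrank K P = Module.finrank K M := by
  rw [← h]
  exact (LinearEquiv.ofInjective f hf).finrank_eq.symm

section aux
variable {K L3 L6 : Type*} [Field K] [Field L3] [Field L6]
    [Algebra K L3] [Algebra L3 L6] [Algebra K L6] [IsScalarTower K L3 L6]
    [FiniteDimensional K L3] (T : L3 →ₗ[K] K) (W : Submodule K L3)

theorem aux_memU (U : Submodule K (Fin 2 → L6))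
    (hU : (U : Set (Fin 2 → L6)) = {v : Fin 2 → L6 | ∃ x y : L3,
      v 0 = algebraMap L3 L6 x ∧ v 1 = algebraMap L3 L6 y ∧ T y = 0})
    (w : Fin 2 → L6) : w ∈ U ↔ ∃ x y : L3,
    w 0 = algebraMap L3 L6 x ∧ w 1 = algebraMap L3 L6 y ∧ T y = 0 := by
  rw [← SetLike.mem_coe, hU]; rfl

theorem aux_dimU (hWm : ∀ y : L3, y ∈ W ↔ T y = 0) (U : Submodule K (Fin 2 → L6))
    (hU : (U : Set (Fin 2 → L6)) = {v : Fin 2 → L6 | ∃ x y : L3,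
      v 0 = algebraMap L3 L6 x ∧ v 1 = algebraMap L3 L6 y ∧ T y = 0}) :
    Module.finrank K U = Module.finrank K L3 + Module.finrank K W := by
  classical
  set A : L3 →ₗ[K] L6 := (Algebra.linearMap L3 L6).restrictScalars K with hA
  have hAinj : Function.Injective A := fun a b hab => (algebraMap L3 L6).injective hab
  let f : (L3 × W) →ₗ[K] (Fin 2 → L6) :=
    { toFun := fun p => ![A p.1, A p.2.1],
      map_add' := by intro p q; funext i; fin_cases i <;> simp
      map_smul' := by intro c p; funext i; fin_cases i <;> simp }
  have hfapp : ∀ p : L3 × W, f p 0 = A p.1 ∧ f p 1 = A p.2 := fun p => ⟨rfl, rfl⟩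
  have hfinj : Function.Injective f := by
    rw [injective_iff_map_eq_zero]
    intro p hp
    obtain ⟨h0, h1⟩ := hfapp p
    rw [hp] at h0 h1
    have e1 : p.1 = 0 := hAinj (show A p.1 = A 0 by rw [map_zero]; exact h0.symm)
    have e2 : (p.2 : L3) = 0 := hAinj (show A p.2 = A 0 by rw [map_zero]; exact h1.symm)
    exact Prod.ext e1 (Subtype.ext e2)
  have hfrange : LinearMap.range f = U := by
    ext w
    rw [aux_memU T U hU w]
    constructor
    · rintro ⟨p, rfl⟩
      obtain ⟨h0, h1⟩ := hfapp p
      exact ⟨p.1, p.2, h0, h1, (hWm _).mp p.2.2⟩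
    · rintro ⟨x, y, h0, h1, hy⟩
      refine ⟨(x, ⟨y, (hWm y).mpr hy⟩), ?_⟩
      obtain ⟨e0, e1⟩ := hfapp (x, ⟨y, (hWm y).mpr hy⟩)
      funext i
      fin_cases i
      · exact e0.trans h0.symm
      · exact e1.trans h1.symm
  rw [aux_finrank f hfinj U hfrange, Module.finrank_prod]

theorem aux_w2 (hWm : ∀ y : L3, y ∈ W ↔ T y = 0) (U : Submodule K (Fin 2 → L6))
    (hU : (U : Set (Fin 2 → L6)) = {v : Fin 2 → L6 | ∃ x y : L3,
      v 0 = algebraMap L3 L6 x ∧ v 1 = algebraMap L3 L6 y ∧ T y = 0})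
    (v : Fin 2 → L6) (hv : v ∈ U) (hv0 : v ≠ 0) (h1 : v 1 ≠ 0) :
    Module.finrank K ↥(U ⊓ (Submodule.span L6 {v}).restrictScalars K) =
      Module.finrank K W := by
  classical
  obtain ⟨x₀, y₀, hx₀, hy₀, hty₀⟩ := (aux_memU T U hU v).mp hv
  have hy₀0 : y₀ ≠ 0 := by
    rintro rfl; exact h1 (by rw [hy₀, map_zero])
  set A : L3 →ₗ[K] L6 := (Algebra.linearMap L3 L6).restrictScalars K with hA
  have hAinj : Function.Injective A := fun a b hab => (algebraMap L3 L6).injective hab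
  let g : W →ₗ[K] (Fin 2 → L6) :=
    { toFun := fun μ => A ((μ : L3) * y₀⁻¹) • v,
      map_add' := by intro a b; simp [add_mul, add_smul]
      map_smul' := by intro c a; simp [smul_mul_assoc, smul_assoc] }
  have hgapp : ∀ μ : W, g μ = A ((μ : L3) * y₀⁻¹) • v := fun _ => rfl
  have hginj : Function.Injective g := by
    rw [injective_iff_map_eq_zero]
    intro μ hμ
    rw [hgapp μ] at hμ
    rcases smul_eq_zero.mp hμ with h | h
    · have : (μ : L3) * y₀⁻¹ = 0 := hAinj (show A _ = A 0 by rw [map_zero]; exact h)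
      exact Subtype.ext ((mul_eq_zero.mp this).resolve_right (inv_ne_zero hy₀0))
    · exact absurd h hv0
  have hgrange : LinearMap.range g = U ⊓ (Submodule.span L6 {v}).restrictScalars K := by
    ext w
    rw [Submodule.mem_inf, aux_memU T U hU w, Submodule.restrictScalars_mem,
      Submodule.mem_span_singleton]
    constructor
    · rintro ⟨μ, rfl⟩
      rw [hgapp μ]
      refine ⟨⟨(μ : L3) * y₀⁻¹ * x₀, (μ : L3), ?_, ?_, (hWm _).mp μ.2⟩,
        ⟨A ((μ : L3) * y₀⁻¹), rfl⟩⟩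
      · show algebraMap L3 L6 ((μ : L3) * y₀⁻¹) * v 0 = _
        rw [hx₀, ← map_mul]
      · show algebraMap L3 L6 ((μ : L3) * y₀⁻¹) * v 1 = _
        rw [hy₀, ← map_mul]
        congr 1
        field_simp
    · rintro ⟨⟨x', y', h0', h1', ht'⟩, ⟨lam, rfl⟩⟩
      refine ⟨⟨y', (hWm y').mpr ht'⟩, ?_⟩
      rw [hgapp]
      have hy₀6 : algebraMap L3 L6 y₀ ≠ 0 := fun h => h1 (hy₀.trans h)
      have hlam : lam * algebraMap L3 L6 y₀ = algebraMap L3 L6 y' := by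
        rw [← hy₀]; exact h1'
      have : A (y' * y₀⁻¹) = lam := by
        apply mul_right_cancel₀ hy₀6
        rw [hlam]
        show algebraMap L3 L6 (y' * y₀⁻¹) * algebraMap L3 L6 y₀ = _
        rw [← map_mul]
        congr 1
        field_simp
      simp only [this]
  exact aux_finrank g hginj _ hgrange

theorem aux_w3 (U : Submodule K (Fin 2 → L6))
    (hU : (U : Set (Fin 2 → L6)) = {v : Fin 2 → L6 | ∃ x y : L3,
      v 0 = algebraMap L3 L6 x ∧ v 1 = algebraMap L3 L6 y ∧ T y = 0})
    (v : Fin 2 → L6) (hv : v ∈ U) (hv0 : v ≠ 0) (h1 : v 1 = 0) :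
    Module.finrank K ↥(U ⊓ (Submodule.span L6 {v}).restrictScalars K) =
      Module.finrank K L3 := by
  classical
  obtain ⟨x₀, y₀, hx₀, hy₀, hty₀⟩ := (aux_memU T U hU v).mp hv
  have hv00 : v 0 ≠ 0 := by
    intro h
    apply hv0
    funext i
    fin_cases i
    · exact h
    · exact h1
  have hx₀0 : x₀ ≠ 0 := by
    rintro rfl; exact hv00 (by rw [hx₀, map_zero])
  set A : L3 →ₗ[K] L6 := (Algebra.linearMap L3 L6).restrictScalars K with hA
  have hAinj : Function.Injective A := fun a b hab => (algebraMap L3 L6).injective hab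
  let g : L3 →ₗ[K] (Fin 2 → L6) :=
    { toFun := fun μ => A (μ * x₀⁻¹) • v,
      map_add' := by intro a b; simp [add_mul, add_smul]
      map_smul' := by intro c a; simp [smul_mul_assoc, smul_assoc] }
  have hgapp : ∀ μ : L3, g μ = A (μ * x₀⁻¹) • v := fun _ => rfl
  have hginj : Function.Injective g := by
    rw [injective_iff_map_eq_zero]
    intro μ hμ
    rw [hgapp μ] at hμ
    rcases smul_eq_zero.mp hμ with h | h
    · have : μ * x₀⁻¹ = 0 := hAinj (show A _ = A 0 by rw [map_zero]; exact h)
      exact (mul_eq_zero.mp this).resolve_right (inv_ne_zero hx₀0)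
    · exact absurd h hv0
  have hgrange : LinearMap.range g = U ⊓ (Submodule.span L6 {v}).restrictScalars K := by
    ext w
    rw [Submodule.mem_inf, aux_memU T U hU w, Submodule.restrictScalars_mem,
      Submodule.mem_span_singleton]
    constructor
    · rintro ⟨μ, rfl⟩
      rw [hgapp μ]
      refine ⟨⟨μ * x₀⁻¹ * x₀, 0, ?_, ?_, map_zero _⟩, ⟨A (μ * x₀⁻¹), rfl⟩⟩
      · show algebraMap L3 L6 (μ * x₀⁻¹) * v 0 = _
        rw [hx₀, ← map_mul]
      · show algebraMap L3 L6 (μ * x₀⁻¹) * v 1 = _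
        rw [h1, mul_zero, map_zero]
    · rintro ⟨⟨x', y', h0', h1', ht'⟩, ⟨lam, rfl⟩⟩
      refine ⟨x', ?_⟩
      rw [hgapp]
      have hx₀6 : algebraMap L3 L6 x₀ ≠ 0 := fun h => hv00 (hx₀.trans h)
      have hlam : lam * algebraMap L3 L6 x₀ = algebraMap L3 L6 x' := by
        rw [← hx₀]; exact h0'
      have : A (x' * x₀⁻¹) = lam := by
        apply mul_right_cancel₀ hx₀6
        rw [hlam]
        show algebraMap L3 L6 (x' * x₀⁻¹) * algebraMap L3 L6 x₀ = _
        rw [← map_mul]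
        congr 1
        field_simp
      simp only [this]
  exact aux_finrank g hginj _ hgrange

end aux

/-- Example: `U = {(x, y) : x, y ∈ F_{q^3}, Tr_{F_{q^3}/F_q}(y) = 0}` is a
`5`-dimensional `F_q`-subspace of `F_{q^6}^2` in which every nonzero vector
spans an `F_{q^6}`-line of weight at least `2`; the weight is exactly `2` when
`y ≠ 0` and `3` when `y = 0`. -/
theorem stmt_14 (q : ℕ) (K L3 L6 : Type*) [Field K] [Field L3] [Field L6]
    [Algebra K L3] [Algebra L3 L6] [Algebra K L6] [IsScalarTower K L3 L6]
    [Fintype K] [Fintype L3] [Fintype L6]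
    (hK : Fintype.card K = q) (h3 : Fintype.card L3 = q ^ 3)
    (h6 : Fintype.card L6 = q ^ 6)
    (U : Submodule K (Fin 2 → L6))
    (hU : (U : Set (Fin 2 → L6)) = {v : Fin 2 → L6 | ∃ x y : L3,
      v 0 = algebraMap L3 L6 x ∧ v 1 = algebraMap L3 L6 y ∧
      Algebra.trace K L3 y = 0}) :
    Module.finrank K U = 5 ∧
    ∀ v : Fin 2 → L6, v ∈ U → v ≠ 0 →
      2 ≤ Module.finrank K ↥(U ⊓ (Submodule.span L6 {v}).restrictScalars K) ∧
      (v 1 ≠ 0 →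
        Module.finrank K ↥(U ⊓ (Submodule.span L6 {v}).restrictScalars K) = 2) ∧
      (v 1 = 0 →
        Module.finrank K ↥(U ⊓ (Submodule.span L6 {v}).restrictScalars K) = 3) := by
  have hq : 1 < q := hK ▸ Fintype.one_lt_card
  have hcard := Module.card_eq_pow_finrank (K := K) (V := L3)
  rw [hK, h3] at hcard
  have hr3 : Module.finrank K L3 = 3 := Nat.pow_right_injective hq hcard.symm
  have hrW : Module.finrank K (LinearMap.ker (Algebra.trace K L3)) = 2 := by
    have hsurj := Algebra.trace_surjective K L3
    have h := LinearMap.finrank_range_add_finrank_ker (Algebra.trace K L3)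
    rw [LinearMap.range_eq_top.mpr hsurj, finrank_top, Module.finrank_self, hr3] at h
    omega
  have hWm : ∀ y : L3, y ∈ LinearMap.ker (Algebra.trace K L3) ↔
      Algebra.trace K L3 y = 0 := fun y => LinearMap.mem_ker
  refine ⟨?_, ?_⟩
  · rw [aux_dimU (Algebra.trace K L3) (LinearMap.ker (Algebra.trace K L3)) hWm U hU,
      hr3, hrW]
  · intro v hv hv0
    have h2 : v 1 ≠ 0 →
        Module.finrank K ↥(U ⊓ (Submodule.span L6 {v}).restrictScalars K) = 2 := by
      intro h
      rw [aux_w2 (Algebra.trace K L3) (LinearMap.ker (Algebra.trace K L3)) hWm U hU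
        v hv hv0 h, hrW]
    have h3' : v 1 = 0 →
        Module.finrank K ↥(U ⊓ (Submodule.span L6 {v}).restrictScalars K) = 3 := by
      intro h
      rw [aux_w3 (Algebra.trace K L3) U hU v hv hv0 h, hr3]
    refine ⟨?_, h2, h3'⟩
    rcases eq_or_ne (v 1) 0 with h | h
    · rw [h3' h]; omega
    · rw [h2 h]
end
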